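/- arXiv:2003.04520 — 13 statements merged into one kernel-verified Lean document; each statement's English description precedes it below -/
import Mathlib

section
/- Let H be a positive semidefinite n×n block matrix with each block a k×k complex matrix, and let tr₂H denote the n×n matrix whose (i,j) entry is the trace of the (i,j) block of H. Then (det(tr₂H)/k)^k ≥ det H. -/
/-!
Reindex `H` so that its `n × n` diagonal blocks are the slices `H_l = [(H_{i,j})_{l,l}]_{i,j}`,
`l < k`; these add up to `tr₂ H`. Fischer's inequality gives `det H ≤ ∏ l, det H_l`,
AM–GM gives `∏ l, det H_l ≤ ((∑ l, det H_l) / k) ^ k`, and superadditivity of `det` on positive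
semidefinite matrices gives `∑ l, det H_l ≤ det (tr₂ H)`.
-/

open Matrix BigOperators ComplexOrder

/-- Second partial trace: matrix of traces of the blocks. -/
noncomputable def ptrace2 {n k : ℕ} (H : Matrix (Fin n × Fin k) (Fin n × Fin k) ℂ) :
    Matrix (Fin n) (Fin n) ℂ :=
  Matrix.of fun i j => ∑ l : Fin k, H (i, l) (j, l)

theorem Real.prod_le_sum_div_card_pow {ι : Type*} (s : Finset ι) (z : ι → ℝ)
    (hz : ∀ i ∈ s, 0 ≤ z i) : ∏ i ∈ s, z i ≤ ((∑ i ∈ s, z i) / s.card) ^ s.card := by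
  rcases s.eq_empty_or_nonempty with rfl | hs
  · simp
  have hgm := Real.geom_mean_le_arith_mean s (fun _ ↦ 1) z (fun _ _ ↦ zero_le_one)
    (by simpa using hs.card_pos) hz
  simp only [Real.rpow_one, one_mul, Finset.sum_const, nsmul_eq_mul, mul_one] at hgm
  calc ∏ i ∈ s, z i = ((∏ i ∈ s, z i) ^ (s.card : ℝ)⁻¹) ^ s.card := by
        rw [← Real.rpow_natCast, ← Real.rpow_mul (Finset.prod_nonneg hz),
          inv_mul_cancel₀ (by simpa using hs.ne_empty), Real.rpow_one]
    _ ≤ _ := by gcongr; exact Real.rpow_nonneg (Finset.prod_nonneg hz) _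

namespace Matrix

variable {𝕜 : Type*} [RCLike 𝕜] {m : Type*} [Fintype m] [DecidableEq m]

theorem IsHermitian.det_one_add {M : Matrix m m 𝕜} (hM : M.IsHermitian) :
    (1 + M).det = ∏ i, (1 + (hM.eigenvalues i : 𝕜)) := by
  conv_lhs => rw [hM.spectral_theorem,
    ← map_one (Unitary.conjStarAlgAut 𝕜 _ hM.eigenvectorUnitary), ← map_add, ← diagonal_one,
    diagonal_add]
  simp [-Unitary.conjStarAlgAut_apply, det_diagonal]

namespace PosSemidef

theorem one_add_det_le_det_one_add [Nonempty m] {M : Matrix m m 𝕜} (hM : M.PosSemidef) :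
    1 + M.det ≤ (1 + M).det := by
  have hev (i : m) : (0 : 𝕜) ≤ hM.1.eigenvalues i :=
    RCLike.ofReal_nonneg.mpr (hM.eigenvalues_nonneg i)
  rw [hM.1.det_one_add, hM.1.det_eq_prod_eigenvalues]
  simpa using Finset.prod_add_prod_le (Finset.mem_univ (Classical.arbitrary m)) le_rfl
    (fun j _ _ ↦ le_add_of_nonneg_right (hev j)) (fun j _ _ ↦ le_add_of_nonneg_left zero_le_one)
    (fun _ _ ↦ zero_le_one) (fun j _ ↦ hev j) (g := fun _ ↦ 1)

open scoped MatrixOrder in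
theorem det_add_det_le_det_add_of_det_ne_zero [Nonempty m] {A B : Matrix m m 𝕜}
    (hA : A.PosSemidef) (hA0 : A.det ≠ 0) (hB : B.PosSemidef) :
    A.det + B.det ≤ (A + B).det := by
  -- With `A = Cᴴ C` and `B = Cᴴ M C`, both sides are `det A` times the two sides of
  -- `1 + det M ≤ det (1 + M)`.
  obtain ⟨C, rfl⟩ := CStarAlgebra.nonneg_iff_eq_star_mul_self.mp hA.nonneg
  rw [star_eq_conjTranspose] at hA0 ⊢
  have hC : IsUnit C.det := isUnit_iff_ne_zero.mpr (right_ne_zero_of_mul (det_mul Cᴴ C ▸ hA0))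
  set M := (C⁻¹)ᴴ * B * C⁻¹
  have hM : M.PosSemidef := hB.conjTranspose_mul_mul_same C⁻¹
  have hB_eq : B = Cᴴ * M * C := by
    rw [← mul_assoc, ← mul_assoc, ← conjTranspose_mul, nonsing_inv_mul C hC, conjTranspose_one,
      one_mul, mul_assoc, nonsing_inv_mul C hC, mul_one]
  have hdet (X : Matrix m m 𝕜) : (Cᴴ * X * C).det = (Cᴴ * C).det * X.det := by
    simp only [det_mul]; ring
  calc (Cᴴ * C).det + B.det = (Cᴴ * C).det * (1 + M.det) := by rw [hB_eq, hdet]; ring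
    _ ≤ (Cᴴ * C).det * (1 + M).det := by
      gcongr
      · exact hA.det_nonneg
      · exact hM.one_add_det_le_det_one_add
    _ = (Cᴴ * C + B).det := by rw [← hdet, hB_eq, mul_add, add_mul, mul_one]

theorem det_add_det_le_det_add [Nonempty m] {A B : Matrix m m 𝕜}
    (hA : A.PosSemidef) (hB : B.PosSemidef) : A.det + B.det ≤ (A + B).det := by
  by_cases hA0 : A.det = 0
  · by_cases hB0 : B.det = 0
    · simpa [hA0, hB0] using (hA.add hB).det_nonneg
    · simpa [add_comm] using hB.det_add_det_le_det_add_of_det_ne_zero hB0 hA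
  · exact hA.det_add_det_le_det_add_of_det_ne_zero hA0 hB

theorem det_le_det_add {A B : Matrix m m 𝕜} (hA : A.PosSemidef) (hB : B.PosSemidef) :
    B.det ≤ (A + B).det := by
  cases isEmpty_or_nonempty m
  · simp
  · exact le_of_add_le_of_nonneg_right (hA.det_add_det_le_det_add hB) hA.det_nonneg

theorem sum_det_le_det_sum [Nonempty m] {ι : Type*} (s : Finset ι) {A : ι → Matrix m m 𝕜}
    (hA : ∀ i ∈ s, (A i).PosSemidef) : ∑ i ∈ s, (A i).det ≤ (∑ i ∈ s, A i).det := by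
  classical
  induction s using Finset.induction_on with
  | empty => simp
  | insert a s ha ih =>
    rw [Finset.forall_mem_insert] at hA
    rw [Finset.sum_insert ha, Finset.sum_insert ha]
    calc (A a).det + ∑ i ∈ s, (A i).det ≤ (A a).det + (∑ i ∈ s, A i).det := by
          gcongr; exact ih hA.2
      _ ≤ _ := hA.1.det_add_det_le_det_add (posSemidef_sum s hA.2)

theorem det_fromBlocks_le_det_mul_det {n : Type*} [Fintype n] [DecidableEq n] {A : Matrix m m 𝕜}
    {B : Matrix m n 𝕜} {D : Matrix n n 𝕜} (hM : (fromBlocks A B Bᴴ D).PosSemidef) :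
    (fromBlocks A B Bᴴ D).det ≤ A.det * D.det := by
  have hA : A.PosSemidef := hM.submatrix Sum.inl
  by_cases hA0 : A.det = 0
  · -- A kernel vector of `A`, padded with zeros, is isotropic for the whole matrix.
    obtain ⟨x, hx, hAx⟩ := exists_mulVec_eq_zero_iff.mpr hA0
    have hMx : fromBlocks A B Bᴴ D *ᵥ Sum.elim x 0 = 0 := by
      refine (hM.dotProduct_mulVec_zero_iff _).mp ?_
      simp [Function.star_sumElim, fromBlocks_mulVec, sumElim_dotProduct_sumElim, hAx]
    have hM0 : (fromBlocks A B Bᴴ D).det = 0 :=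
      exists_mulVec_eq_zero_iff.mp
        ⟨_, fun h ↦ hx (funext fun i ↦ congrFun h (Sum.inl i)), hMx⟩
    simp [hM0, hA0]
  · have hApd : A.PosDef :=
      hA.posDef_iff_isUnit.mpr ((isUnit_iff_isUnit_det A).mpr (isUnit_iff_ne_zero.mpr hA0))
    have := hApd.isUnit.invertible
    have hS : (D - Bᴴ * A⁻¹ * B).PosSemidef := (hApd.fromBlocks₁₁ B D).mp hM
    have hX : (Bᴴ * A⁻¹ * B).PosSemidef := by
      simpa using hApd.posSemidef.inv.conjTranspose_mul_mul_same B
    rw [det_fromBlocks₁₁, invOf_eq_nonsing_inv]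
    gcongr
    · exact hA.det_nonneg
    · simpa using hX.det_le_det_add hS

theorem det_le_det_submatrix_mul_det_submatrix {ι α β : Type*} [Fintype ι] [DecidableEq ι]
    [Fintype α] [DecidableEq α] [Fintype β] [DecidableEq β] {M : Matrix ι ι 𝕜}
    (hM : M.PosSemidef) {f : α → ι} {g : β → ι} (hfg : (Sum.elim f g).Bijective) :
    M.det ≤ (M.submatrix f f).det * (M.submatrix g g).det := by
  set e := Equiv.ofBijective _ hfg
  have hblocks : M.submatrix e e = fromBlocks (M.submatrix f f) (M.submatrix f g)
      (M.submatrix f g)ᴴ (M.submatrix g g) := by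
    ext (i | i) (j | j)
    all_goals simp [e]
    exact (hM.1.apply _ _).symm
  rw [← det_submatrix_equiv_self e M, hblocks]
  exact det_fromBlocks_le_det_mul_det (hblocks ▸ hM.submatrix e)

theorem det_le_prod_det_submatrix_snd {k : ℕ} {M : Matrix (m × Fin k) (m × Fin k) 𝕜}
    (hM : M.PosSemidef) : M.det ≤ ∏ l, (M.submatrix (·, l) (·, l)).det := by
  induction k with
  | zero => simp
  | succ k ih =>
    have hsplit : (Sum.elim (fun i : m ↦ (i, (0 : Fin (k + 1))))
        (fun p : m × Fin k ↦ (p.1, p.2.succ))).Bijective := by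
      refine ⟨Function.Injective.sumElim ?_ ?_ ?_, ?_⟩
      · exact fun i j h ↦ congrArg Prod.fst h
      · intro p q h
        simp only [Prod.mk.injEq, Fin.succ_inj] at h
        exact Prod.ext h.1 h.2
      · exact fun i p h ↦ Fin.succ_ne_zero _ (congrArg Prod.snd h).symm
      · rintro ⟨i, l⟩
        cases l using Fin.cases with
        | zero => exact ⟨Sum.inl i, rfl⟩
        | succ l => exact ⟨Sum.inr (i, l), rfl⟩
    rw [Fin.prod_univ_succ]
    refine (hM.det_le_det_submatrix_mul_det_submatrix hsplit).trans ?_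
    gcongr
    · exact (hM.submatrix _).det_nonneg
    · exact ih (hM.submatrix _)

end PosSemidef

end Matrix

theorem ptrace2_eq_sum_submatrix {n k : ℕ} (H : Matrix (Fin n × Fin k) (Fin n × Fin k) ℂ) :
    ptrace2 H = ∑ l, H.submatrix (·, l) (·, l) := by
  ext i j
  simp [ptrace2, Matrix.sum_apply]

theorem stmt0_general {n k : ℕ} (hn : 0 < n)
    (H : Matrix (Fin n × Fin k) (Fin n × Fin k) ℂ) (hH : H.PosSemidef) :
    ((ptrace2 H).det.re / k) ^ k ≥ H.det.re := by
  have : Nonempty (Fin n) := Fin.pos_iff_nonempty.mp hn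
  set d : Fin k → ℂ := fun l ↦ (H.submatrix (·, l) (·, l)).det
  have hd (l : Fin k) : 0 ≤ d l := (hH.submatrix _).det_nonneg
  have hd_re (l : Fin k) : 0 ≤ (d l).re := (Complex.nonneg_iff.mp (hd l)).1
  have hprod : H.det ≤ ∏ l, d l := hH.det_le_prod_det_submatrix_snd
  have hsum : ∑ l, d l ≤ (ptrace2 H).det := by
    rw [ptrace2_eq_sum_submatrix]
    exact PosSemidef.sum_det_le_det_sum _ fun l _ ↦ hH.submatrix _
  calc H.det.re ≤ (∏ l, d l).re := Complex.re_le_re hprod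
    _ = ∏ l, (d l).re := by
      rw [Finset.prod_congr rfl fun l _ ↦ Complex.eq_re_of_ofReal_le (by exact_mod_cast hd l)]
      norm_cast
    _ ≤ ((∑ l, (d l).re) / k) ^ k := by
      simpa using Real.prod_le_sum_div_card_pow Finset.univ _ fun l _ ↦ hd_re l
    _ ≤ ((ptrace2 H).det.re / k) ^ k := by
      have := Finset.sum_nonneg fun l (_ : l ∈ Finset.univ) ↦ hd_re l
      gcongr
      exact Complex.re_sum .. ▸ Complex.re_le_re hsum

/-- Fiedler–Markham: (det(tr₂H)/k)^k ≥ det H. -/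
theorem stmt0 {n k : ℕ} (hn : 0 < n) (hk : 0 < k)
    (H : Matrix (Fin n × Fin k) (Fin n × Fin k) ℂ) (hH : H.PosSemidef) :
    ((ptrace2 H).det.re / k) ^ k ≥ H.det.re :=
  stmt0_general hn H hH
end

section
/- Let H be a positive semidefinite n×n block matrix with k×k blocks, and let tr₁H = Σᵢ H_{i,i} be the sum of the diagonal blocks. Then (det(tr₁H)/n)^n ≥ det H. -/
/-
Let `T = tr₁ H`. If `T` is singular, `H` cannot be positive definite, because `T` is a sum of
principal submatrices of `H`; hence `det H = 0`. Otherwise conjugate `H` by `1 ⊗ T^{-1/2}`: the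
result is positive semidefinite with trace `tr (T⁻¹ T) = k` and determinant `det H / (det T)^n`, so
AM-GM on its `n k` eigenvalues gives `det H ≤ (det T)^n / n^(n k) ≤ (det T / n)^n`.
-/

open Matrix BigOperators ComplexOrder

/-- First partial trace: sum of the diagonal blocks. -/
noncomputable def ptrace1 {n k : ℕ} (H : Matrix (Fin n × Fin k) (Fin n × Fin k) ℂ) :
    Matrix (Fin k) (Fin k) ℂ :=
  Matrix.of fun l m => ∑ i : Fin n, H (i, l) (i, m)

open scoped Kronecker MatrixOrder

theorem Real.prod_le_sum_div_card_pow_s1 {ι : Type*} [Fintype ι] {x : ι → ℝ} (hx : ∀ i, 0 ≤ x i) :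
    ∏ i, x i ≤ ((∑ i, x i) / Fintype.card ι) ^ Fintype.card ι := by
  cases isEmpty_or_nonempty ι
  · simp
  set N := Fintype.card ι
  have hN : (N : ℝ) ≠ 0 := Nat.cast_ne_zero.mpr Fintype.card_ne_zero
  have hprod : 0 ≤ ∏ i, x i := Finset.prod_nonneg fun i _ => hx i
  have amgm := Real.geom_mean_le_arith_mean_weighted Finset.univ (fun _ => (N : ℝ)⁻¹) x
    (fun _ _ => by positivity) (by simp [N, hN]) (fun i _ => hx i)
  rw [Real.finsetProd_rpow _ _ (fun i _ => hx i), ← Finset.mul_sum, inv_mul_eq_div] at amgm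
  calc ∏ i, x i = ((∏ i, x i) ^ (N : ℝ)⁻¹) ^ N :=
        (Real.rpow_inv_natCast_pow hprod Fintype.card_ne_zero).symm
    _ ≤ ((∑ i, x i) / N) ^ N := by gcongr

namespace Matrix

variable {ι 𝕜 : Type*} [Fintype ι] [DecidableEq ι] [RCLike 𝕜] {A B : Matrix ι ι 𝕜}

theorem PosSemidef.ofReal_re_det (hA : A.PosSemidef) : ((RCLike.re A.det : ℝ) : 𝕜) = A.det :=
  RCLike.ext_iff.mpr ⟨by simp, by simp [(RCLike.nonneg_iff.mp hA.det_nonneg).2]⟩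

theorem PosSemidef.re_det_le_re_trace_div_pow (hA : A.PosSemidef) :
    RCLike.re A.det ≤ (RCLike.re A.trace / Fintype.card ι) ^ Fintype.card ι := by
  rw [hA.isHermitian.det_eq_prod_eigenvalues, hA.isHermitian.trace_eq_sum_eigenvalues,
    ← RCLike.ofReal_prod, ← RCLike.ofReal_sum, RCLike.ofReal_re, RCLike.ofReal_re]
  exact Real.prod_le_sum_div_card_pow_s1 hA.eigenvalues_nonneg

theorem PosSemidef.re_det_le_re_trace_inv_mul_div_pow_mul (hA : A.PosSemidef) (hB : B.PosDef) :
    RCLike.re A.det ≤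
      (RCLike.re (B⁻¹ * A).trace / Fintype.card ι) ^ Fintype.card ι * RCLike.re B.det := by
  set S := CFC.sqrt B⁻¹
  have hS : S.PosSemidef := (CFC.sqrt_nonneg _).posSemidef
  have hSS : S * S = B⁻¹ := CFC.sqrt_mul_sqrt_self _ hB.inv.posSemidef.nonneg
  have hC : (S * A * S).PosSemidef := by
    simpa only [hS.1.eq] using hA.mul_mul_conjTranspose_same S
  have htr : (S * A * S).trace = (B⁻¹ * A).trace := by rw [trace_mul_cycle, hSS]
  have hdet : (S * A * S).det = A.det * B.det⁻¹ := by
    rw [det_mul, det_mul, mul_right_comm, ← det_mul, hSS, det_nonsing_inv, Ring.inverse_eq_inv',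
      mul_comm]
  have hb : 0 < RCLike.re B.det := (RCLike.pos_iff.mp hB.det_pos).1
  have amgm := hC.re_det_le_re_trace_div_pow
  rwa [htr, hdet, ← hA.ofReal_re_det, ← hB.posSemidef.ofReal_re_det, ← RCLike.ofReal_inv,
    ← RCLike.ofReal_mul, RCLike.ofReal_re, mul_inv_le_iff₀ hb] at amgm

end Matrix

section PartialTrace

variable {n k : ℕ}

theorem ptrace1_eq_sum_submatrix (H : Matrix (Fin n × Fin k) (Fin n × Fin k) ℂ) :
    ptrace1 H = ∑ i, H.submatrix (Prod.mk i) (Prod.mk i) := by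
  ext l m
  simp [ptrace1, Matrix.sum_apply]

theorem Matrix.PosSemidef.ptrace1 {H : Matrix (Fin n × Fin k) (Fin n × Fin k) ℂ}
    (hH : H.PosSemidef) : (ptrace1 H).PosSemidef := by
  rw [ptrace1_eq_sum_submatrix]
  exact posSemidef_sum _ fun i _ => hH.submatrix _

theorem Matrix.PosDef.ptrace1 {H : Matrix (Fin n × Fin k) (Fin n × Fin k) ℂ}
    (hH : H.PosDef) (hn : 0 < n) : (ptrace1 H).PosDef := by
  rw [ptrace1_eq_sum_submatrix]
  exact posDef_sum ⟨⟨0, hn⟩, Finset.mem_univ _⟩ fun i _ =>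
    hH.submatrix (Prod.mk_right_injective i)

theorem trace_one_kronecker_mul_eq_trace_mul_ptrace1 (B : Matrix (Fin k) (Fin k) ℂ)
    (H : Matrix (Fin n × Fin k) (Fin n × Fin k) ℂ) :
    ((1 : Matrix (Fin n) (Fin n) ℂ) ⊗ₖ B * H).trace = (B * ptrace1 H).trace := by
  simp only [trace, diag_apply, mul_apply, kroneckerMap_apply, one_apply, ite_mul, one_mul,
    zero_mul, Fintype.sum_prod_type, Finset.sum_ite_irrel, Finset.sum_const_zero,
    Finset.sum_ite_eq, Finset.mem_univ, ↓reduceIte, ptrace1, of_apply, Finset.mul_sum]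
  rw [Finset.sum_comm]
  exact Finset.sum_congr rfl fun _ _ => Finset.sum_comm

end PartialTrace

/-- Lin 2016: (det(tr₁H)/n)^n ≥ det H. -/
theorem stmt1 {n k : ℕ} (hn : 0 < n) (hk : 0 < k)
    (H : Matrix (Fin n × Fin k) (Fin n × Fin k) ℂ) (hH : H.PosSemidef) :
    ((ptrace1 H).det.re / n) ^ n ≥ H.det.re := by
  have hT := hH.ptrace1
  by_cases hdet : (ptrace1 H).det = 0
  · have hHdet : H.det = 0 := by
      by_contra h
      exact ((hH.posDef_iff_det_ne_zero.mpr h).ptrace1 hn).det_pos.ne' hdet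
    simp [hdet, hHdet, hn.ne']
  have hTpd : (ptrace1 H).PosDef := hT.posDef_iff_det_ne_zero.mpr hdet
  have hnorm := hH.re_det_le_re_trace_inv_mul_div_pow_mul (PosDef.one.kronecker hTpd)
  rw [inv_kronecker, inv_one, trace_one_kronecker_mul_eq_trace_mul_ptrace1,
    nonsing_inv_mul _ (isUnit_iff_ne_zero.mpr hdet), trace_one, det_kronecker, det_one, one_pow,
    one_mul, ← hT.ofReal_re_det, ← RCLike.ofReal_pow, RCLike.ofReal_re] at hnorm
  rw [Fintype.card_prod, Fintype.card_fin, Fintype.card_fin, RCLike.natCast_re, Nat.cast_mul,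
    div_mul_cancel_right₀ (by positivity)] at hnorm
  have hn1 : (n : ℝ)⁻¹ ≤ 1 := inv_le_one_of_one_le₀ (by exact_mod_cast hn)
  have ht : 0 ≤ (ptrace1 H).det.re := (RCLike.nonneg_iff.mp hT.det_nonneg).1
  calc H.det.re ≤ ((n : ℝ)⁻¹) ^ (n * k) * (ptrace1 H).det.re ^ n := hnorm
    _ ≤ ((n : ℝ)⁻¹) ^ n * (ptrace1 H).det.re ^ n :=
        mul_le_mul_of_nonneg_right
          (pow_le_pow_of_le_one (by positivity) hn1 (Nat.le_mul_of_pos_right n hk))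
          (pow_nonneg ht n)
    _ = ((ptrace1 H).det.re / n) ^ n := by rw [← mul_pow, inv_mul_eq_div]
end

section
/- Let H be a positive semidefinite n×n block matrix with k×k blocks. Then (det(tr₂H)/kⁿ)^k ≥ det H, where tr₂H = [tr H_{i,j}]_{i,j=1}^n. -/
/-!
`A ↦ log det A` is concave on positive definite matrices: writing `A = S²` and
`B = S Z S`, the determinant of `a A + b B` is `det A · ∏ (a + b μᵢ)` over the eigenvalues
`μᵢ` of `Z`, and `log` is concave. Two applications of Jensen's inequality to it give the
theorem, with `Hₗ = [H (i, l) (j, l)]ᵢⱼ`, so that `tr₂ H = ∑ₗ Hₗ`: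

* averaging the conjugates `Dε H Dε` by all sign matrices `Dε = diag(εₗ I)` kills the
  off-diagonal blocks, while each conjugate has determinant `det H`; hence
  `log det H ≤ ∑ₗ log det Hₗ` (Fischer's inequality);
* averaging the `Hₗ` gives `∑ₗ log det Hₗ ≤ k log det (tr₂ H / k)`.
-/

open Matrix BigOperators ComplexOrder

namespace Matrix

theorem convex_setOf_posDef {m : Type*} : Convex ℝ {A : Matrix m m ℂ | A.PosDef} := by
  intro A hA B hB a b ha hb hab
  rcases ha.eq_or_lt with rfl | ha
  · obtain rfl : b = 1 := by simpa using hab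
    simpa using hB
  · exact (hA.smul ha).add_posSemidef (hB.posSemidef.smul hb)

variable {m : Type*} [Fintype m] [DecidableEq m]

theorem PosSemidef.det_re_nonneg {A : Matrix m m ℂ} (hA : A.PosSemidef) : 0 ≤ A.det.re :=
  (Complex.nonneg_iff.mp hA.det_nonneg).1

theorem PosSemidef.ofReal_det_re {A : Matrix m m ℂ} (hA : A.PosSemidef) :
    ((A.det.re : ℝ) : ℂ) = A.det :=
  Complex.ext rfl (Complex.nonneg_iff.mp hA.det_nonneg).2

theorem PosDef.det_re_pos {A : Matrix m m ℂ} (hA : A.PosDef) : 0 < A.det.re :=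
  (Complex.pos_iff.mp hA.det_pos).1

theorem IsHermitian.det_smul_one_add_smul {Z : Matrix m m ℂ} (hZ : Z.IsHermitian) (a b : ℝ) :
    (a • 1 + b • Z).det = ∏ i, ((a + b * hZ.eigenvalues i : ℝ) : ℂ) := by
  have : a • 1 + b • Z = cfc (fun x : ℝ => a + b * x) Z := by
    rw [cfc_add .., cfc_const .., cfc_const_mul .., cfc_id' ..]
    simp [Algebra.algebraMap_eq_smul_one]
  rw [this, hZ.cfc_eq]
  simp [IsHermitian.cfc, -Unitary.conjStarAlgAut_apply]

theorem PosDef.mul_log_det_re_le_log_det_re_smul_one_add_smul {Z : Matrix m m ℂ} (hZ : Z.PosDef)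
    {a b : ℝ} (ha : 0 ≤ a) (hb : 0 ≤ b) (hab : a + b = 1) :
    b * Real.log Z.det.re ≤ Real.log (a • 1 + b • Z).det.re := by
  have hdet : Z.det.re = ∏ i, hZ.1.eigenvalues i := by
    rw [hZ.1.det_eq_prod_eigenvalues]; norm_cast
  have hpos (i : m) : 0 < a + b * hZ.1.eigenvalues i := by
    simpa using (convex_Ioi (0 : ℝ)) (Set.mem_Ioi.2 one_pos) (hZ.eigenvalues_pos i) ha hb hab
  rw [hZ.1.det_smul_one_add_smul, ← Complex.ofReal_prod, Complex.ofReal_re, hdet,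
    Real.log_prod fun i _ => (hZ.eigenvalues_pos i).ne', Finset.mul_sum,
    Real.log_prod fun i _ => (hpos i).ne']
  gcongr with i
  simpa using strictConcaveOn_log_Ioi.concaveOn.2 (Set.mem_Ioi.2 one_pos)
    (hZ.eigenvalues_pos i) ha hb hab

open scoped MatrixOrder in
theorem PosDef.exists_posDef_det_smul_add_smul_eq {A B : Matrix m m ℂ} (hA : A.PosDef)
    (hB : B.PosDef) : ∃ Z : Matrix m m ℂ, Z.PosDef ∧ B.det = A.det * Z.det ∧
      ∀ a b : ℝ, (a • A + b • B).det = A.det * (a • 1 + b • Z).det := by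
  obtain ⟨S, hS, rfl⟩ : ∃ S : Matrix m m ℂ, S.PosDef ∧ S * S = A :=
    ⟨_, hA.isStrictlyPositive.sqrt.posDef, CFC.sqrt_mul_sqrt_self A hA.posSemidef.nonneg⟩
  have hSdet : IsUnit S.det := (isUnit_iff_isUnit_det S).mp hS.isUnit
  obtain ⟨Z, hZ, rfl⟩ : ∃ Z : Matrix m m ℂ, Z.PosDef ∧ S * Z * S = B := by
    refine ⟨S⁻¹ * B * S⁻¹, ?_, ?_⟩
    · simpa [hS.inv.isHermitian.eq] using
        hB.conjTranspose_mul_mul_same (mulVec_injective_iff_isUnit.mpr hS.inv.isUnit)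
    · simp only [← Matrix.mul_assoc, mul_nonsing_inv S hSdet, Matrix.one_mul]
      rw [Matrix.mul_assoc, nonsing_inv_mul S hSdet, Matrix.mul_one]
  refine ⟨Z, hZ, by simp only [det_mul]; ring, fun a b => ?_⟩
  have : a • (S * S) + b • (S * Z * S) = S * (a • 1 + b • Z) * S := by
    simp only [Matrix.mul_add, Matrix.add_mul, Matrix.mul_smul, Matrix.smul_mul, Matrix.mul_one]
  rw [this]
  simp only [det_mul]
  ring

theorem concaveOn_log_det_re :
    ConcaveOn ℝ {A : Matrix m m ℂ | A.PosDef} fun A => Real.log A.det.re := by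
  refine ⟨convex_setOf_posDef, fun A hA B hB a b ha hb hab => ?_⟩
  obtain ⟨Z, hZ, hBZ, hcomb⟩ := hA.exists_posDef_det_smul_add_smul_eq hB
  have hAZ : (a • (1 : Matrix m m ℂ) + b • Z).PosDef :=
    convex_setOf_posDef PosDef.one hZ ha hb hab
  have hdet_mul (X : Matrix m m ℂ) : (A.det * X.det).re = A.det.re * X.det.re := by
    nth_rewrite 1 [← hA.posSemidef.ofReal_det_re]
    exact Complex.re_ofReal_mul _ _
  have hconc := hZ.mul_log_det_re_le_log_det_re_smul_one_add_smul ha hb hab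
  simp only [smul_eq_mul]
  rw [hcomb, hBZ, hdet_mul, hdet_mul, Real.log_mul hA.det_re_pos.ne' hZ.det_re_pos.ne',
    Real.log_mul hA.det_re_pos.ne' hAZ.det_re_pos.ne']
  have : a * Real.log A.det.re + b * Real.log A.det.re = Real.log A.det.re := by
    rw [← add_mul, hab, one_mul]
  linarith

theorem sum_log_det_re_le_card_mul_log_det_re_mean {ι : Type*} [Fintype ι] [Nonempty ι]
    (A : ι → Matrix m m ℂ) (hA : ∀ i, (A i).PosDef) :
    ∑ i, Real.log (A i).det.re ≤
      Fintype.card ι * Real.log ((Fintype.card ι : ℝ)⁻¹ • ∑ i, A i).det.re := by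
  have hc : (0 : ℝ) < Fintype.card ι := Nat.cast_pos.mpr Fintype.card_pos
  have := concaveOn_log_det_re.le_map_sum (t := Finset.univ)
    (w := fun _ => (Fintype.card ι : ℝ)⁻¹) (p := A) (fun _ _ => inv_nonneg.mpr hc.le)
    (by simp [hc.ne']) (fun i _ => hA i)
  rwa [← Finset.smul_sum, ← Finset.smul_sum, smul_eq_mul, inv_mul_le_iff₀ hc] at this

section Pinching

variable {ι : Type*} [Fintype ι] [DecidableEq ι]

theorem sum_units_apply_mul_apply (i j : ι) :
    ∑ ε : ι → ℤˣ, ((ε i : ℤ) : ℂ) * ((ε j : ℤ) : ℂ) =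
      if i = j then (Fintype.card (ι → ℤˣ) : ℂ) else 0 := by
  split_ifs with h
  · subst h
    simp [← Int.cast_mul, ← Units.val_mul, Int.units_mul_self]
  · have hflip := Equiv.sum_comp (Equiv.mulRight (Pi.mulSingle i (-1) : ι → ℤˣ))
      fun ε : ι → ℤˣ => ((ε i : ℤ) : ℂ) * ((ε j : ℤ) : ℂ)
    simp [Ne.symm h] at hflip
    exact CharZero.neg_eq_self_iff.mp hflip

variable (m) in
def signDiagonal (ε : ι → ℤˣ) : Matrix (m × ι) (m × ι) ℂ :=
  diagonal fun p => ((ε p.2 : ℤ) : ℂ)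

theorem signDiagonal_mul_self (ε : ι → ℤˣ) : signDiagonal m ε * signDiagonal m ε = 1 := by
  simp [signDiagonal, diagonal_mul_diagonal, ← Int.cast_mul, ← Units.val_mul,
    Int.units_mul_self]

theorem sum_signDiagonal_mul_mul_signDiagonal (H : Matrix (m × ι) (m × ι) ℂ) :
    ∑ ε : ι → ℤˣ, signDiagonal m ε * H * signDiagonal m ε =
      Fintype.card (ι → ℤˣ) • blockDiagonal fun l => H.submatrix (·, l) (·, l) := by
  ext ⟨i, l⟩ ⟨j, l'⟩
  simp only [signDiagonal, sum_apply, diagonal_mul, mul_diagonal, smul_apply,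
    blockDiagonal_apply, nsmul_eq_mul]
  simp_rw [mul_right_comm _ (H _ _), ← Finset.sum_mul, sum_units_apply_mul_apply]
  split_ifs <;> simp_all

theorem PosDef.log_det_re_le_sum_log_det_re_submatrix {H : Matrix (m × ι) (m × ι) ℂ}
    (hH : H.PosDef) :
    Real.log H.det.re ≤ ∑ l, Real.log (H.submatrix (·, l) (·, l)).det.re := by
  have hblock (l : ι) : (H.submatrix (·, l) (·, l)).PosDef :=
    hH.submatrix (Prod.mk_left_injective l)
  have hconj (ε : ι → ℤˣ) : (signDiagonal m ε * H * signDiagonal m ε).PosDef := by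
    have hD : (signDiagonal m ε)ᴴ = signDiagonal m ε := by
      simp [signDiagonal, diagonal_conjTranspose]
    simpa [hD] using hH.conjTranspose_mul_mul_same
      (mulVec_injective_iff_isUnit.mpr (IsUnit.of_mul_eq_one _ (signDiagonal_mul_self ε)))
  have hdet (ε : ι → ℤˣ) : (signDiagonal m ε * H * signDiagonal m ε).det = H.det := by
    rw [det_mul, det_mul, mul_right_comm, ← det_mul, signDiagonal_mul_self, det_one, one_mul]
  have hc : (0 : ℝ) < Fintype.card (ι → ℤˣ) := Nat.cast_pos.mpr Fintype.card_pos
  have := sum_log_det_re_le_card_mul_log_det_re_mean _ hconj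
  have hre : (∏ l, (H.submatrix (·, l) (·, l)).det).re =
      ∏ l, (H.submatrix (·, l) (·, l)).det.re := by
    rw [← Complex.ofReal_re (∏ l, _), Complex.ofReal_prod]
    simp only [fun l => (hblock l).posSemidef.ofReal_det_re]
  simp only [hdet, Finset.sum_const, Finset.card_univ, sum_signDiagonal_mul_mul_signDiagonal,
    ← Nat.cast_smul_eq_nsmul ℝ, inv_smul_smul₀ hc.ne', det_blockDiagonal, hre, smul_eq_mul,
    Real.log_prod fun l _ => (hblock l).det_re_pos.ne'] at this
  exact le_of_mul_le_mul_left this hc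

end Pinching

end Matrix

theorem stmt2_general {n k : ℕ} (hk : 0 < k)
    (H : Matrix (Fin n × Fin k) (Fin n × Fin k) ℂ) (hH : H.PosSemidef) :
    ((ptrace2 H).det.re / (k : ℝ) ^ n) ^ k ≥ H.det.re := by
  have : Nonempty (Fin k) := ⟨⟨0, hk⟩⟩
  rcases eq_or_ne H.det 0 with hdet | hdet
  · rw [hdet, Complex.zero_re, ptrace2_eq_sum_submatrix]
    have := (posSemidef_sum Finset.univ fun l _ => hH.submatrix (·, l)).det_re_nonneg
    positivity
  have hH' : H.PosDef := hH.posDef_iff_det_ne_zero.mpr hdet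
  have hblock (l : Fin k) : (H.submatrix (·, l) (·, l)).PosDef :=
    hH'.submatrix (Prod.mk_left_injective l)
  have hP : (ptrace2 H).PosDef :=
    ptrace2_eq_sum_submatrix H ▸ posDef_sum Finset.univ_nonempty fun l _ => hblock l
  have hscale : ((k : ℝ)⁻¹ • ptrace2 H).det.re = (ptrace2 H).det.re / (k : ℝ) ^ n := by
    rw [← Complex.coe_smul, det_smul, Fintype.card_fin, ← Complex.ofReal_pow,
      Complex.re_ofReal_mul, inv_pow, inv_mul_eq_div]
  have hlog : Real.log H.det.re ≤ Real.log (((ptrace2 H).det.re / (k : ℝ) ^ n) ^ k) := by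
    calc Real.log H.det.re ≤ ∑ l, Real.log (H.submatrix (·, l) (·, l)).det.re :=
          hH'.log_det_re_le_sum_log_det_re_submatrix
      _ ≤ k * Real.log ((k : ℝ)⁻¹ • ptrace2 H).det.re := by
          simpa [ptrace2_eq_sum_submatrix] using sum_log_det_re_le_card_mul_log_det_re_mean _ hblock
      _ = _ := by rw [hscale, Real.log_pow]
  exact (Real.log_le_log_iff hH'.det_re_pos (by have := hP.det_re_pos; positivity)).mp hlog

/-- Strong Fiedler–Markham: (det(tr₂H)/kⁿ)^k ≥ det H. -/
theorem stmt2 {n k : ℕ} (hn : 0 < n) (hk : 0 < k)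
    (H : Matrix (Fin n × Fin k) (Fin n × Fin k) ℂ) (hH : H.PosSemidef) :
    ((ptrace2 H).det.re / (k : ℝ) ^ n) ^ k ≥ H.det.re :=
  stmt2_general hk H hH
end

section
/- If H ∈ M_n(M_k) has numerical range contained in the sector S_α for some α ∈ [0, π/2), then the numerical range of the first partial trace tr₁H = Σᵢ H_{i,i} is also contained in S_α. -/
open Matrix BigOperators ComplexOrder

/-- The sector S_α in the complex plane. -/
noncomputable def sector (α : ℝ) : Set ℂ := {z | 0 < z.re ∧ |z.im| ≤ z.re * Real.tan α}

/-- Numerical range of a complex matrix. -/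
noncomputable def numRange {I : Type*} [Fintype I] (A : Matrix I I ℂ) : Set ℂ :=
  {z | ∃ x : I → ℂ, star x ⬝ᵥ x = 1 ∧ star x ⬝ᵥ (A *ᵥ x) = z}

lemma sector_sum {α : ℝ} (hα : 0 ≤ Real.tan α) {ι : Type*} (s : Finset ι) (hs : s.Nonempty)
    (f : ι → ℂ) (hf : ∀ i ∈ s, f i ∈ sector α) : (∑ i ∈ s, f i) ∈ sector α := by
  constructor
  · rw [Complex.re_sum]
    exact Finset.sum_pos (fun i hi => (hf i hi).1) hs
  · rw [Complex.im_sum, Complex.re_sum]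
    calc |∑ i ∈ s, (f i).im| ≤ ∑ i ∈ s, |(f i).im| := Finset.abs_sum_le_sum_abs _ _
    _ ≤ ∑ i ∈ s, (f i).re * Real.tan α := Finset.sum_le_sum fun i hi => (hf i hi).2
    _ = (∑ i ∈ s, (f i).re) * Real.tan α := (Finset.sum_mul ..).symm

/-- If W(H) ⊆ S_α then W(tr₁H) ⊆ S_α. -/
theorem stmt5 {n k : ℕ} (hn : 0 < n) (hk : 0 < k) {α : ℝ}
    (hα0 : 0 ≤ α) (hα : α < Real.pi / 2)
    (H : Matrix (Fin n × Fin k) (Fin n × Fin k) ℂ)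
    (hH : numRange H ⊆ sector α) :
    numRange (ptrace1 H) ⊆ sector α := by
  intro z hz
  obtain ⟨x, hx1, hx2⟩ := hz
  set w : Fin n → ℂ := fun i => ∑ l, (starRingEnd ℂ) (x l) * ∑ m, H (i, l) (i, m) * x m with hw
  have hz' : z = ∑ i, w i := by
    rw [← hx2]
    simp only [dotProduct, mulVec, ptrace1, Matrix.of_apply, Pi.star_apply, hw,
      Finset.sum_mul, Finset.mul_sum]
    trans ∑ l : Fin k, ∑ i : Fin n, ∑ m : Fin k, star (x l) * (H (i, l) (i, m) * x m)
    · exact Finset.sum_congr rfl fun l _ => Finset.sum_comm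
    · exact Finset.sum_comm
  have hwi : ∀ i : Fin n, w i ∈ sector α := by
    intro i
    apply hH
    refine ⟨fun p => if p.1 = i then x p.2 else 0, ?_, ?_⟩
    · rw [← hx1]
      simp only [dotProduct, Pi.star_apply]
      rw [Fintype.sum_prod_type]
      rw [Finset.sum_eq_single i]
      · simp
      · intro j _ hj; simp [hj]
      · simp
    · simp only [dotProduct, mulVec, Pi.star_apply, hw]
      rw [Fintype.sum_prod_type]
      rw [Finset.sum_eq_single i]
      · congr 1; ext l
        congr 1; · simp
        rw [Fintype.sum_prod_type]
        rw [Finset.sum_eq_single i]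
        · simp
        · intro j _ hj; simp [hj]
        · simp
      · intro j _ hj; simp [hj]
      · simp
  rw [hz']
  exact sector_sum (Real.tan_nonneg_of_nonneg_of_le_pi_div_two hα0 hα.le) Finset.univ
    (Finset.univ_nonempty_iff.2 ⟨⟨0, hn⟩⟩) w (fun i _ => hwi i)
end

section
/- If H ∈ M_n(M_k) has numerical range contained in the sector S_α for some α ∈ [0, π/2), then the numerical range of the second partial trace tr₂H = [tr H_{i,j}]_{i,j=1}^n is also contained in S_α. -/
open Matrix BigOperators ComplexOrder

/-- If W(H) ⊆ S_α then W(tr₂H) ⊆ S_α. -/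
theorem stmt6 {n k : ℕ} (hn : 0 < n) (hk : 0 < k) {α : ℝ}
    (hα0 : 0 ≤ α) (hα : α < Real.pi / 2)
    (H : Matrix (Fin n × Fin k) (Fin n × Fin k) ℂ)
    (hH : numRange H ⊆ sector α) :
    numRange (ptrace2 H) ⊆ sector α := by
  intro z hz
  obtain ⟨x, hx1, hxz⟩ := hz
  set y : Fin k → (Fin n × Fin k) → ℂ := fun l p => if p.2 = l then x p.1 else 0 with hy
  have hval : ∀ l : Fin k, star (y l) ⬝ᵥ (H *ᵥ y l)
      = ∑ i, ∑ j, star (x i) * (H (i, l) (j, l) * x j) := by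
    intro l
    simp [hy, dotProduct, mulVec, Fintype.sum_prod_type, apply_ite (star : ℂ → ℂ),
      ite_mul, mul_ite, Finset.sum_ite_eq', Finset.mul_sum]
  have hzl : ∀ l : Fin k, star (y l) ⬝ᵥ (H *ᵥ y l) ∈ sector α := by
    intro l
    apply hH
    refine ⟨y l, ?_, rfl⟩
    simpa [hy, dotProduct, Fintype.sum_prod_type, apply_ite (star : ℂ → ℂ),
      ite_mul, mul_ite, Finset.sum_ite_eq'] using hx1
  have key : z = ∑ l : Fin k, star (y l) ⬝ᵥ (H *ᵥ y l) := by
    rw [← hxz]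
    simp only [hval]
    simp only [dotProduct, mulVec, ptrace2, Matrix.of_apply,
      Finset.mul_sum, Finset.sum_mul]
    calc (∑ i : Fin n, ∑ j : Fin n, ∑ l : Fin k, star (x i) * (H (i, l) (j, l) * x j))
        = ∑ i : Fin n, ∑ l : Fin k, ∑ j : Fin n, star (x i) * (H (i, l) (j, l) * x j) :=
          Finset.sum_congr rfl fun i _ => Finset.sum_comm
      _ = ∑ l : Fin k, ∑ i : Fin n, ∑ j : Fin n, star (x i) * (H (i, l) (j, l) * x j) :=
          Finset.sum_comm
  have hne : (Finset.univ : Finset (Fin k)).Nonempty := ⟨⟨0, hk⟩, Finset.mem_univ _⟩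
  have hre : 0 < z.re := by
    rw [key]; rw [Complex.re_sum]
    exact Finset.sum_pos (fun l _ => (hzl l).1) hne
  refine ⟨hre, ?_⟩
  rw [key]; simp only [Complex.im_sum, Complex.re_sum]
  calc |∑ l : Fin k, (star (y l) ⬝ᵥ (H *ᵥ y l)).im|
      ≤ ∑ l : Fin k, |(star (y l) ⬝ᵥ (H *ᵥ y l)).im| := Finset.abs_sum_le_sum_abs _ _
    _ ≤ ∑ l : Fin k, (star (y l) ⬝ᵥ (H *ᵥ y l)).re * Real.tan α :=
        Finset.sum_le_sum fun l _ => (hzl l).2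
    _ = (∑ l : Fin k, (star (y l) ⬝ᵥ (H *ᵥ y l)).re) * Real.tan α := by
        rw [Finset.sum_mul]
end

section
/- Let H ∈ M_n(M_k) be positive semidefinite. For 1 ≤ i,j ≤ n write H_{i,j} = [h^{i,j}_{l,m}]_{l,m=1}^k, and define G_{l,m} = [h^{i,j}_{l,m}]_{i,j=1}^n ∈ M_n and det₁H = [det G_{l,m}]_{l,m=1}^k. Then (tr(det₁H)/k)^k ≥ det H. -/
/-!
Fischer's inequality for the partition of `H` into the `n × n` principal blocks `G_{l,l}` gives
`det H ≤ ∏ₗ det G_{l,l}`, and the `det G_{l,l}` are the nonnegative diagonal entries of `det₁H`,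
so AM–GM finishes. Fischer's inequality reduces, splitting off one block at a time, to the case
of two blocks, which is the Schur complement formula together with monotonicity of the
determinant in the Loewner order.
-/

open Matrix BigOperators ComplexOrder

/-- First partial determinant: det₁H = [det G_{l,m}]_{l,m}, where
G_{l,m} = [h^{i,j}_{l,m}]_{i,j}. -/
noncomputable def pdet1 {n k : ℕ} (H : Matrix (Fin n × Fin k) (Fin n × Fin k) ℂ) :
    Matrix (Fin k) (Fin k) ℂ :=
  Matrix.of fun l m => (Matrix.of fun i j : Fin n => H (i, l) (j, m)).det

def Equiv.sumProdFinSucc (ι : Type*) (k : ℕ) : ι ⊕ ι × Fin k ≃ ι × Fin (k + 1) where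
  toFun := Sum.elim (·, 0) fun p => (p.1, p.2.succ)
  invFun p := Fin.cases (Sum.inl p.1) (fun l => Sum.inr (p.1, l)) p.2
  left_inv := by rintro (i | ⟨i, l⟩) <;> simp
  right_inv := by rintro ⟨i, l⟩; cases l using Fin.cases <;> simp

theorem Real.prod_le_arith_mean_pow {ι : Type*} (s : Finset ι) {z : ι → ℝ}
    (hz : ∀ i ∈ s, 0 ≤ z i) : ∏ i ∈ s, z i ≤ ((∑ i ∈ s, z i) / s.card) ^ s.card := by
  rcases s.eq_empty_or_nonempty with rfl | hs
  · simp
  have hcard : (s.card : ℝ) ≠ 0 := by exact_mod_cast hs.card_pos.ne'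
  have hgm := geom_mean_le_arith_mean_weighted s (fun _ => (s.card : ℝ)⁻¹) z
    (fun _ _ => by positivity) (by simp [hcard]) hz
  calc ∏ i ∈ s, z i = (∏ i ∈ s, z i ^ (s.card : ℝ)⁻¹) ^ s.card := by
        rw [← Finset.prod_pow]
        exact Finset.prod_congr rfl fun i hi =>
          (rpow_inv_natCast_pow (hz i hi) (by exact_mod_cast hcard)).symm
    _ ≤ (∑ i ∈ s, (s.card : ℝ)⁻¹ * z i) ^ s.card :=
        pow_le_pow_left₀ (Finset.prod_nonneg fun i hi => rpow_nonneg (hz i hi) _) hgm _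
    _ = ((∑ i ∈ s, z i) / s.card) ^ s.card := by rw [← Finset.mul_sum, inv_mul_eq_div]

namespace Matrix

open scoped MatrixOrder

variable {𝕜 : Type*} [RCLike 𝕜] {n : Type*} [Fintype n] [DecidableEq n]

theorem one_le_det_of_one_le {M : Matrix n n 𝕜} (h : 1 ≤ M) : 1 ≤ M.det := by
  have hM : M.IsHermitian := by simpa using (le_iff.mp h).isHermitian.add isHermitian_one
  have hev : ∀ i, 1 ≤ hM.eigenvalues i := fun i =>
    (CFC.one_le_iff M).mp h _ (hM.spectrum_real_eq_range_eigenvalues ▸ ⟨i, rfl⟩)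
  rw [hM.det_eq_prod_eigenvalues]
  exact_mod_cast Finset.one_le_prod fun i _ => hev i

theorem det_le_det_of_le {A B : Matrix n n 𝕜} (hA : 0 ≤ A) (hAB : A ≤ B) : A.det ≤ B.det := by
  by_cases hApd : A.PosDef
  swap
  · rw [hA.posSemidef.posDef_iff_det_ne_zero, not_not] at hApd
    exact hApd ▸ (hA.trans hAB).posSemidef.det_nonneg
  -- writing `A = X⋆X`, conjugation by `X⁻¹` reduces to the case `A = 1`
  obtain ⟨X, rfl⟩ := CStarAlgebra.nonneg_iff_eq_star_mul_self.mp hA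
  have hX : IsUnit X.det := isUnit_of_mul_isUnit_right <| by
    simpa only [det_mul] using (isUnit_iff_isUnit_det _).mp hApd.isUnit
  set M := star X⁻¹ * B * X⁻¹
  have hM : 1 ≤ M := by
    convert star_left_conjugate_le_conjugate hAB X⁻¹ using 1
    rw [mul_assoc, mul_assoc, mul_nonsing_inv _ hX, mul_one, ← star_mul, mul_nonsing_inv _ hX,
      star_one]
  have hB : B = star X * M * X := by
    rw [← mul_assoc, ← mul_assoc, ← star_mul, nonsing_inv_mul _ hX, star_one, one_mul, mul_assoc,
      nonsing_inv_mul _ hX, mul_one]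
  clear_value M
  calc (star X * X).det = (star X * X).det * 1 := (mul_one _).symm
    _ ≤ (star X * X).det * M.det :=
        mul_le_mul_of_nonneg_left (one_le_det_of_one_le hM) hA.posSemidef.det_nonneg
    _ = B.det := by rw [hB, det_mul, det_mul, det_mul, mul_right_comm]

namespace PosSemidef

theorem det_fromBlocks_le {m : Type*} [Fintype m] [DecidableEq m] {A : Matrix m m 𝕜}
    {B : Matrix m n 𝕜} {D : Matrix n n 𝕜} (h : (fromBlocks A B Bᴴ D).PosSemidef) :
    (fromBlocks A B Bᴴ D).det ≤ A.det * D.det := by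
  have hA : A.PosSemidef := h.submatrix Sum.inl
  by_cases hApd : A.PosDef
  · have := hApd.isUnit.invertible
    have hS : 0 ≤ D - Bᴴ * A⁻¹ * B := ((PosDef.fromBlocks₁₁ B D hApd).mp h).nonneg
    have hSD : D - Bᴴ * A⁻¹ * B ≤ D :=
      sub_le_self _ (hApd.inv.posSemidef.conjTranspose_mul_mul_same B).nonneg
    rw [det_fromBlocks₁₁, invOf_eq_nonsing_inv]
    exact mul_le_mul_of_nonneg_left (det_le_det_of_le hS hSD) hA.det_nonneg
  · have hMpd : ¬(fromBlocks A B Bᴴ D).PosDef := fun hM =>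
      hApd (hM.submatrix Sum.inl_injective)
    rw [h.posDef_iff_det_ne_zero, not_not] at hMpd
    rw [hA.posDef_iff_det_ne_zero, not_not] at hApd
    simp [hMpd, hApd]

variable {ι : Type*} [Fintype ι] [DecidableEq ι]

theorem det_le_prod_det_blockDiag_fin : ∀ {k : ℕ} {M : Matrix (ι × Fin k) (ι × Fin k) 𝕜},
    M.PosSemidef → M.det ≤ ∏ l, (M.blockDiag l).det
  | 0, M, _ => by simp
  | k + 1, M, hM => by
    set M' := M.submatrix (Equiv.sumProdFinSucc ι k) (Equiv.sumProdFinSucc ι k)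
    have hM' : M'.PosSemidef := hM.submatrix _
    have hblocks : M' = fromBlocks M'.toBlocks₁₁ M'.toBlocks₁₂ M'.toBlocks₁₂ᴴ M'.toBlocks₂₂ := by
      have hM'herm := hM'.isHermitian
      rw [← fromBlocks_toBlocks M', isHermitian_fromBlocks_iff] at hM'herm
      rw [hM'herm.2.1, fromBlocks_toBlocks]
    have ih : M'.toBlocks₂₂.det ≤ ∏ l : Fin k, (M.blockDiag l.succ).det :=
      det_le_prod_det_blockDiag_fin (hM.submatrix _)
    calc M.det = M'.det := (det_submatrix_equiv_self _ M).symm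
      _ ≤ M'.toBlocks₁₁.det * M'.toBlocks₂₂.det := hblocks ▸ det_fromBlocks_le (hblocks ▸ hM')
      _ ≤ (M.blockDiag 0).det * ∏ l : Fin k, (M.blockDiag l.succ).det :=
        mul_le_mul_of_nonneg_left ih (hM'.submatrix Sum.inl).det_nonneg
      _ = ∏ l, (M.blockDiag l).det := by rw [Fin.prod_univ_succ]

theorem det_le_prod_det_blockDiag {κ : Type*} [Fintype κ] [DecidableEq κ]
    {M : Matrix (ι × κ) (ι × κ) 𝕜} (hM : M.PosSemidef) :
    M.det ≤ ∏ l, (M.blockDiag l).det := by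
  let e := (Equiv.refl ι).prodCongr (Fintype.equivFin κ).symm
  calc M.det = (M.submatrix e e).det := (det_submatrix_equiv_self e M).symm
    _ ≤ ∏ l, ((M.submatrix e e).blockDiag l).det :=
      det_le_prod_det_blockDiag_fin (hM.submatrix e)
    _ = ∏ l, (M.blockDiag l).det :=
      (Fintype.equivFin κ).symm.prod_comp fun l => (M.blockDiag l).det

end PosSemidef

end Matrix

theorem stmt8_general {n k : ℕ}
    (H : Matrix (Fin n × Fin k) (Fin n × Fin k) ℂ) (hH : H.PosSemidef) :
    ((pdet1 H).trace.re / k) ^ k ≥ H.det.re := by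
  set d : Fin k → ℝ := fun l => (pdet1 H l l).re
  have hd_nonneg : ∀ l, 0 ≤ pdet1 H l l := fun l => (hH.submatrix (·, l)).det_nonneg
  have hd : ∀ l, (d l : ℂ) = pdet1 H l l := fun l =>
    (Complex.eq_re_of_ofReal_le (hd_nonneg l)).symm
  have hfischer : H.det ≤ ((∏ l, d l : ℝ) : ℂ) := by
    push_cast [hd]
    exact hH.det_le_prod_det_blockDiag
  have htrace : (pdet1 H).trace.re = ∑ l, d l := Complex.re_sum _ _
  calc H.det.re ≤ ∏ l, d l := (Complex.le_def.mp hfischer).1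
    _ ≤ ((∑ l, d l) / k) ^ k := by
      simpa only [Finset.card_univ, Fintype.card_fin] using
        Real.prod_le_arith_mean_pow Finset.univ fun l _ => (Complex.le_def.mp (hd_nonneg l)).1
    _ = ((pdet1 H).trace.re / k) ^ k := by rw [htrace]

/-- Choi: (tr(det₁H)/k)^k ≥ det H. -/
theorem stmt8 {n k : ℕ} (hn : 0 < n) (hk : 0 < k)
    (H : Matrix (Fin n × Fin k) (Fin n × Fin k) ℂ) (hH : H.PosSemidef) :
    ((pdet1 H).trace.re / k) ^ k ≥ H.det.re :=
  stmt8_general H hH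
end

section
/- Let H = [H_{i,j}]_{i,j=1}^n ∈ M_n(M_k) be positive semidefinite and define det₂H = [det H_{i,j}]_{i,j=1}^n. Then (tr(det₂H)/n)^n ≥ det H. -/
/-!
Fischer's inequality `det H ≤ ∏ i, det H_{i,i}` follows by induction on `n` from its two-block
case. There `det H = det A * det (D - Bᴴ A⁻¹ B)` by the Schur complement, and the determinant is
monotone on positive semidefinite matrices: if `M` is invertible and `N = Cᴴ C`, then
`det (M + N) = det M * det (1 + C M⁻¹ Cᴴ)` and the eigenvalues of `1 + C M⁻¹ Cᴴ` are at least `1`.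
AM-GM applied to the nonnegative numbers `det H_{i,i}` then bounds the product by
`(tr det₂H / n) ^ n`.
-/

open Matrix BigOperators ComplexOrder

/-- Second partial determinant: det₂H = [det H_{i,j}]_{i,j}. -/
noncomputable def pdet2 {n k : ℕ} (H : Matrix (Fin n × Fin k) (Fin n × Fin k) ℂ) :
    Matrix (Fin n) (Fin n) ℂ :=
  Matrix.of fun i j => (Matrix.of fun l m : Fin k => H (i, l) (j, m)).det

open Finset in
theorem Real.prod_le_arith_mean_pow_card {ι : Type*} (s : Finset ι) (z : ι → ℝ)
    (hz : ∀ i ∈ s, 0 ≤ z i) : ∏ i ∈ s, z i ≤ ((∑ i ∈ s, z i) / #s) ^ #s := by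
  rcases s.eq_empty_or_nonempty with rfl | hs
  · simp
  have hcard : #s ≠ 0 := hs.card_pos.ne'
  have hamgm := Real.geom_mean_le_arith_mean_weighted s (fun _ => (#s : ℝ)⁻¹) z
    (fun _ _ => by positivity) (by simp [hcard]) hz
  calc ∏ i ∈ s, z i = (∏ i ∈ s, z i ^ ((#s : ℝ)⁻¹)) ^ #s := by
        rw [← prod_pow]
        exact prod_congr rfl fun i hi => (Real.rpow_inv_natCast_pow (hz i hi) hcard).symm
    _ ≤ (∑ i ∈ s, (#s : ℝ)⁻¹ * z i) ^ #s :=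
        pow_le_pow_left₀ (prod_nonneg fun i hi => Real.rpow_nonneg (hz i hi) _) hamgm _
    _ = ((∑ i ∈ s, z i) / #s) ^ #s := by rw [← mul_sum, inv_mul_eq_div]

def finSuccProdEquiv (n : ℕ) (κ : Type*) : κ ⊕ (Fin n × κ) ≃ Fin (n + 1) × κ where
  toFun := Sum.elim (Prod.mk 0) (Prod.map Fin.succ id)
  invFun p := Fin.cases (Sum.inl p.2) (fun i => Sum.inr (i, p.2)) p.1
  left_inv := by rintro (l | ⟨i, l⟩) <;> simp
  right_inv := by
    rintro ⟨i, l⟩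
    induction i using Fin.cases <;> simp

namespace Matrix

variable {m κ 𝕜 : Type*} [Fintype m] [DecidableEq m] [Fintype κ] [DecidableEq κ] [RCLike 𝕜]

open scoped MatrixOrder Pointwise

lemma PosSemidef.one_le_det_one_add {Q : Matrix m m 𝕜} (hQ : Q.PosSemidef) :
    1 ≤ (1 + Q).det := by
  have hH : (1 + Q).IsHermitian := isHermitian_one.add hQ.1
  rw [hH.det_eq_prod_eigenvalues]
  refine Finset.one_le_prod fun i _ => ?_
  obtain ⟨_, rfl, x, hx, hxi⟩ : hH.eigenvalues i ∈ {1} + spectrum ℝ Q := by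
    rw [spectrum.singleton_add_eq, map_one]
    exact hH.eigenvalues_mem_spectrum_real i
  have hx0 : 0 ≤ x := spectrum_nonneg_of_nonneg hQ.nonneg hx
  rw [← hxi, RCLike.ofReal_add, RCLike.ofReal_one, le_add_iff_nonneg_right]
  exact_mod_cast hx0

lemma PosSemidef.det_le_det_add_s9 {M N : Matrix m m 𝕜} (hM : M.PosSemidef)
    (hN : N.PosSemidef) : M.det ≤ (M + N).det := by
  by_cases hdet : M.det = 0
  · exact hdet ▸ (hM.add hN).det_nonneg
  obtain ⟨C, rfl⟩ := CStarAlgebra.nonneg_iff_eq_star_mul_self.mp hN.nonneg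
  have hQ : (C * M⁻¹ * Cᴴ).PosSemidef :=
    ((hM.posDef_iff_det_ne_zero.mpr hdet).inv.posSemidef).mul_mul_conjTranspose_same C
  rw [det_add_mul _ _ (isUnit_iff_ne_zero.mpr hdet)]
  exact le_mul_of_one_le_right hM.det_nonneg hQ.one_le_det_one_add

lemma PosSemidef.det_le_det_toBlocks₁₁_mul_det_toBlocks₂₂ {α β : Type*} [Fintype α]
    [DecidableEq α] [Fintype β] [DecidableEq β] {M : Matrix (α ⊕ β) (α ⊕ β) 𝕜}
    (hM : M.PosSemidef) : M.det ≤ M.toBlocks₁₁.det * M.toBlocks₂₂.det := by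
  by_cases hdet : M.toBlocks₁₁.det = 0
  · suffices M.det = 0 by rw [this, hdet, zero_mul]
    by_contra h
    exact ((hM.posDef_iff_det_ne_zero.mpr h).submatrix Sum.inl_injective).det_pos.ne' hdet
  have hA : M.toBlocks₁₁.PosDef := (hM.submatrix Sum.inl).posDef_iff_det_ne_zero.mpr hdet
  have : Invertible M.toBlocks₁₁ := hA.isUnit.invertible
  have hM' : M = fromBlocks M.toBlocks₁₁ M.toBlocks₁₂ M.toBlocks₁₂ᴴ M.toBlocks₂₂ := by
    conv_lhs => rw [← fromBlocks_toBlocks M]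
    congr
    ext i j
    exact (hM.1.apply (Sum.inr i) (Sum.inl j)).symm
  set B := M.toBlocks₁₂
  have hS : (M.toBlocks₂₂ - Bᴴ * M.toBlocks₁₁⁻¹ * B).PosSemidef :=
    (PosDef.fromBlocks₁₁ B _ hA).mp (hM' ▸ hM)
  have hSD := hS.det_le_det_add_s9 (hA.inv.posSemidef.conjTranspose_mul_mul_same B)
  rw [sub_add_cancel] at hSD
  rw [hM', det_fromBlocks₁₁, invOf_eq_nonsing_inv]
  exact mul_le_mul_of_nonneg_left hSD hA.det_pos.le

theorem PosSemidef.det_le_prod_det_diagonal_blocks {n : ℕ}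
    {H : Matrix (Fin n × κ) (Fin n × κ) 𝕜} (hH : H.PosSemidef) :
    H.det ≤ ∏ i, (H.submatrix (Prod.mk i) (Prod.mk i)).det := by
  induction n with
  | zero => simp
  | succ n ih =>
    set M := H.submatrix (finSuccProdEquiv n κ) (finSuccProdEquiv n κ)
    have hM : M.PosSemidef := hH.submatrix _
    calc H.det = M.det := (det_submatrix_equiv_self _ _).symm
      _ ≤ M.toBlocks₁₁.det * M.toBlocks₂₂.det :=
          hM.det_le_det_toBlocks₁₁_mul_det_toBlocks₂₂
      _ ≤ M.toBlocks₁₁.det * ∏ i : Fin n, (H.submatrix (Prod.mk i.succ) (Prod.mk i.succ)).det :=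
          mul_le_mul_of_nonneg_left (ih (hM.submatrix Sum.inr)) (hM.submatrix Sum.inl).det_nonneg
      _ = ∏ i, (H.submatrix (Prod.mk i) (Prod.mk i)).det := by
          rw [Fin.prod_univ_succ]
          rfl

end Matrix

theorem stmt9_general {n k : ℕ}
    (H : Matrix (Fin n × Fin k) (Fin n × Fin k) ℂ) (hH : H.PosSemidef) :
    ((pdet2 H).trace.re / n) ^ n ≥ H.det.re := by
  have hdiag_nonneg (i : Fin n) : 0 ≤ pdet2 H i i := (hH.submatrix (Prod.mk i)).det_nonneg
  set a : Fin n → ℝ := fun i => (pdet2 H i i).re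
  have hdiag (i : Fin n) : pdet2 H i i = a i := Complex.eq_re_of_ofReal_le (hdiag_nonneg i)
  have hfischer : H.det ≤ ((∏ i, a i : ℝ) : ℂ) := by
    push_cast
    simp_rw [← hdiag]
    exact hH.det_le_prod_det_diagonal_blocks
  have hamgm := Real.prod_le_arith_mean_pow_card Finset.univ a
    fun i _ => (Complex.le_def.mp (hdiag_nonneg i)).1
  rw [Finset.card_univ, Fintype.card_fin] at hamgm
  calc H.det.re ≤ ∏ i, a i := (Complex.le_def.mp hfischer).1
    _ ≤ ((∑ i, a i) / n) ^ n := hamgm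
    _ = ((pdet2 H).trace.re / n) ^ n := by rw [trace, Complex.re_sum]; rfl

/-- Choi: (tr(det₂H)/n)^n ≥ det H. -/
theorem stmt9 {n k : ℕ} (hn : 0 < n) (hk : 0 < k)
    (H : Matrix (Fin n × Fin k) (Fin n × Fin k) ℂ) (hH : H.PosSemidef) :
    ((pdet2 H).trace.re / n) ^ n ≥ H.det.re :=
  stmt9_general H hH
end

section
/- Let A ∈ M_m(M_n) be positive semidefinite. Then (tr A)·I_{mn} + A ≥ I_m ⊗ (tr₁A) + (tr₂A) ⊗ I_n in the Löwner order. -/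
open Matrix BigOperators Kronecker ComplexOrder

/-!
Write `A = C Cᴴ = ∑ᵣ wᵣ wᵣᴴ` with `wᵣ` the columns of `C`, and let `Φ(A)` be the difference of the
two sides. For `x ∈ ℂᵐ ⊗ ℂⁿ`, antisymmetrize `wᵣ ⊗ x ∈ (ℂᵐ ⊗ ℂᵐ) ⊗ (ℂⁿ ⊗ ℂⁿ)` in both pairs of
factors (without normalizing). Summed over `r`, the squared norm of the result is
`4 ⟨x, Φ(A) x⟩`: each of `‖wᵣ‖²‖x‖²`, `|⟨wᵣ, x⟩|²`, `-⟨x, (tr₂(wᵣwᵣᴴ) ⊗ I) x⟩` and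
`-⟨x, (I ⊗ tr₁(wᵣwᵣᴴ)) x⟩` arises four times. Hence `4 Φ(A) = Mᴴ M` for an explicit `M`.
-/

namespace Matrix

variable {ι κ R : Type*} [Fintype ι] [Ring R] [StarRing R]

theorem conjTranspose_submatrix_mul_submatrix (X Y : Matrix ι κ R) (e : ι ≃ ι) :
    (X.submatrix e id)ᴴ * Y.submatrix e id = Xᴴ * Y := by
  rw [conjTranspose_submatrix, submatrix_mul_equiv, submatrix_id_id]

theorem conjTranspose_sub_submatrix_mul_sub_submatrix {e : Equiv.Perm ι}
    (he : Function.Involutive e) (X Y : Matrix ι κ R) :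
    (X - X.submatrix e id)ᴴ * (Y - Y.submatrix e id) =
      2 • (Xᴴ * Y - Xᴴ * Y.submatrix e id) := by
  have hY : Y = (Y.submatrix e id).submatrix e id := by
    rw [submatrix_submatrix, he.comp_self, Function.id_comp, submatrix_id_id]
  have hcross : (X.submatrix e id)ᴴ * Y = Xᴴ * Y.submatrix e id := by
    conv_lhs => rw [hY]
    exact conjTranspose_submatrix_mul_submatrix X _ e
  rw [conjTranspose_sub, Matrix.sub_mul, Matrix.mul_sub, Matrix.mul_sub, hcross,
    conjTranspose_submatrix_mul_submatrix, two_nsmul]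
  abel

end Matrix

noncomputable def andoMap {m n : ℕ} (A : Matrix (Fin m × Fin n) (Fin m × Fin n) ℂ) :
    Matrix (Fin m × Fin n) (Fin m × Fin n) ℂ :=
  (A.trace • 1 + A) - (1 ⊗ₖ ptrace1 A + ptrace2 A ⊗ₖ 1)

section DoubleWedge

variable {α β ρ : Type*} [DecidableEq α] [DecidableEq β]

/-- `tensorColumns C * x` lists the tensors `wᵣ ⊗ x`, `wᵣ` the columns of `C`, with the factors
regrouped as `(ℂᵐ ⊗ ℂᵐ) ⊗ (ℂⁿ ⊗ ℂⁿ)`. -/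
def tensorColumns (C : Matrix (α × β) ρ ℂ) : Matrix ((α × α) × (β × β) × ρ) (α × β) ℂ :=
  of fun ⟨(i, j), (k, l), r⟩ p => if p = (j, l) then C (i, k) r else 0

def swapFirst : Equiv.Perm ((α × α) × (β × β) × ρ) :=
  (Equiv.prodComm _ _).prodCongr (Equiv.refl _)

def swapSecond : Equiv.Perm ((α × α) × (β × β) × ρ) :=
  (Equiv.refl _).prodCongr ((Equiv.prodComm _ _).prodCongr (Equiv.refl ρ))

def doubleWedge (C : Matrix (α × β) ρ ℂ) : Matrix ((α × α) × (β × β) × ρ) (α × β) ℂ :=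
  let N := tensorColumns C - (tensorColumns C).submatrix swapFirst id
  N - N.submatrix swapSecond id

variable [Fintype α] [Fintype β] [Fintype ρ]

theorem conjTranspose_tensorColumns_mul_self (C : Matrix (α × β) ρ ℂ) :
    (tensorColumns C)ᴴ * tensorColumns C = (C * Cᴴ).trace • 1 := by
  ext ⟨a, b⟩ ⟨a', b'⟩
  simp [ite_and, apply_ite (starRingEnd ℂ), Finset.sum_ite_eq, mul_comm, eq_comm (a := a'),
    eq_comm (a := b'), tensorColumns, mul_apply, Fintype.sum_prod_type, one_apply, trace]

theorem conjTranspose_tensorColumns_mul_swapBoth (C : Matrix (α × β) ρ ℂ) :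
    (tensorColumns C)ᴴ * ((tensorColumns C).submatrix swapSecond id).submatrix swapFirst id =
      C * Cᴴ := by
  ext ⟨a, b⟩ ⟨a', b'⟩
  simp [ite_and, apply_ite (starRingEnd ℂ), Finset.sum_ite_eq, mul_comm, tensorColumns,
    swapSecond, swapFirst, mul_apply, Fintype.sum_prod_type]

end DoubleWedge

section PartialTraces

variable {ρ : Type*} [Fintype ρ] {m n : ℕ}

theorem conjTranspose_tensorColumns_mul_swapFirst (C : Matrix (Fin m × Fin n) ρ ℂ) :
    (tensorColumns C)ᴴ * (tensorColumns C).submatrix swapFirst id = ptrace2 (C * Cᴴ) ⊗ₖ 1 := by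
  ext ⟨a, b⟩ ⟨a', b'⟩
  simp [ite_and, apply_ite (starRingEnd ℂ), Finset.sum_ite_eq, mul_comm, eq_comm (a := b'),
    tensorColumns, swapFirst, mul_apply, Fintype.sum_prod_type, one_apply, ptrace2]

theorem conjTranspose_tensorColumns_mul_swapSecond (C : Matrix (Fin m × Fin n) ρ ℂ) :
    (tensorColumns C)ᴴ * (tensorColumns C).submatrix swapSecond id = 1 ⊗ₖ ptrace1 (C * Cᴴ) := by
  ext ⟨a, b⟩ ⟨a', b'⟩
  simp [ite_and, apply_ite (starRingEnd ℂ), Finset.sum_ite_eq, mul_comm, eq_comm (a := a'),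
    tensorColumns, swapSecond, mul_apply, Fintype.sum_prod_type, one_apply, ptrace1]

theorem conjTranspose_doubleWedge_mul_self (C : Matrix (Fin m × Fin n) ρ ℂ) :
    (doubleWedge C)ᴴ * doubleWedge C = 4 • andoMap (C * Cᴴ) := by
  set T := tensorColumns C
  have hFirst : Function.Involutive
      (swapFirst : Equiv.Perm ((Fin m × Fin m) × (Fin n × Fin n) × ρ)) := fun _ => rfl
  have hSecond : Function.Involutive
      (swapSecond : Equiv.Perm ((Fin m × Fin m) × (Fin n × Fin n) × ρ)) := fun _ => rfl
  have hcomm : (T - T.submatrix swapFirst id).submatrix swapSecond id =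
      T.submatrix swapSecond id - (T.submatrix swapSecond id).submatrix swapFirst id := rfl
  rw [doubleWedge, conjTranspose_sub_submatrix_mul_sub_submatrix hSecond, hcomm,
    conjTranspose_sub_submatrix_mul_sub_submatrix hFirst,
    conjTranspose_sub_submatrix_mul_sub_submatrix hFirst, conjTranspose_tensorColumns_mul_self,
    conjTranspose_tensorColumns_mul_swapFirst, conjTranspose_tensorColumns_mul_swapSecond,
    conjTranspose_tensorColumns_mul_swapBoth, andoMap]
  module

theorem posSemidef_andoMap_mul_conjTranspose (C : Matrix (Fin m × Fin n) ρ ℂ) :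
    (andoMap (C * Cᴴ)).PosSemidef := by
  have h := (posSemidef_conjTranspose_mul_self (doubleWedge C)).smul
    (a := (4 : ℝ)⁻¹) (by norm_num)
  rwa [conjTranspose_doubleWedge_mul_self, ← Nat.cast_smul_eq_nsmul ℝ, smul_smul,
    Nat.cast_ofNat, inv_mul_cancel₀ four_ne_zero, one_smul] at h

end PartialTraces

/-- Ando: (tr A)·I_{mn} + A ≥ I_m ⊗ tr₁A + (tr₂A) ⊗ I_n. -/
theorem stmt11 {m n : ℕ}
    (A : Matrix (Fin m × Fin n) (Fin m × Fin n) ℂ) (hA : A.PosSemidef) :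
    ((A.trace • (1 : Matrix (Fin m × Fin n) (Fin m × Fin n) ℂ) + A) -
      ((1 : Matrix (Fin m) (Fin m) ℂ) ⊗ₖ ptrace1 A +
        ptrace2 A ⊗ₖ (1 : Matrix (Fin n) (Fin n) ℂ))).PosSemidef := by
  obtain ⟨B, rfl⟩ : ∃ B : Matrix (Fin m × Fin n) (Fin m × Fin n) ℂ, A = star B * B := by
    open scoped MatrixOrder in
    exact CStarAlgebra.nonneg_iff_eq_star_mul_self.mp hA.nonneg
  have h := posSemidef_andoMap_mul_conjTranspose Bᴴ
  rwa [conjTranspose_conjTranspose, ← star_eq_conjTranspose] at h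
end

section
/- Let A ∈ M_m(M_n) be positive semidefinite. Then (tr A)·I_{mn} + (tr₂A) ⊗ I_n ≥ A + I_m ⊗ (tr₁A) in the Löwner order. -/
open Matrix BigOperators Kronecker ComplexOrder

/-!
For every matrix `A` (positive or not) and every vector `x`, the quadratic form at `x` of the
gap matrix `(tr A) I + tr₂A ⊗ I - A - I ⊗ tr₁A` equals `¼ ∑ₖ vₖ* A vₖ`. Here `k = ((i,l),(j,l'))`
runs over pairs of indices and `vₖ` is obtained from `x̄_{il} e_{(j,l')}` by symmetrising in the
block indices `i, j` and antisymmetrising in the inner indices `l, l'`. Expanding, pairing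
`x̄_{il} e_{(j,l')}` with itself, with its swap of block indices, of inner indices, and of both
yields `tr A ‖x‖²`, `x* (tr₂A ⊗ I) x`, `- x* (I ⊗ tr₁A) x` and `- x* A x` respectively. So the
quadratic form is a sum of values of the quadratic form of `A`, and is nonnegative when `A ≥ 0`.
-/

-- Over `ℂ` the Hermitian condition is automatic, by polarization.
theorem Matrix.PosSemidef.of_forall_dotProduct_mulVec_nonneg {ι : Type*} [Fintype ι]
    [DecidableEq ι] {M : Matrix ι ι ℂ} (hM : ∀ x, 0 ≤ star x ⬝ᵥ (M *ᵥ x)) : M.PosSemidef := by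
  refine .of_dotProduct_mulVec_nonneg ?_ hM
  rw [← isSymmetric_toEuclideanLin_iff, LinearMap.isSymmetric_iff_inner_map_self_real]
  intro v
  rw [Complex.conj_eq_iff_im, EuclideanSpace.inner_eq_star_dotProduct, dotProduct_star,
    Complex.star_def, Complex.conj_im, neg_eq_zero, dotProduct_comm]
  exact (Complex.nonneg_iff.mp (hM v.ofLp)).2.symm

section Involution

variable {R ι K : Type*} [CommRing R] [StarRing R] [Fintype ι] [Fintype K] (A : Matrix ι ι R)
  {σ : K → K}

theorem Function.Involutive.sum_star_dotProduct_mulVec_comp (hσ : Function.Involutive σ)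
    (f g : K → ι → R) :
    ∑ k, star (f (σ k)) ⬝ᵥ A *ᵥ g k = ∑ k, star (f k) ⬝ᵥ A *ᵥ g (σ k) :=
  (Equiv.sum_comp hσ.toPerm _).symm.trans (by simp only [Function.Involutive.coe_toPerm, hσ _])

theorem Function.Involutive.sum_star_dotProduct_mulVec_add_comp (hσ : Function.Involutive σ)
    (f g : K → ι → R) :
    ∑ k, star (f k + f (σ k)) ⬝ᵥ A *ᵥ (g k + g (σ k)) =
      2 * ∑ k, (star (f k) ⬝ᵥ A *ᵥ g k + star (f k) ⬝ᵥ A *ᵥ g (σ k)) := by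
  simp only [star_add, mulVec_add, dotProduct_add, add_dotProduct, Finset.sum_add_distrib,
    hσ.sum_star_dotProduct_mulVec_comp A f, hσ _]
  ring

theorem Function.Involutive.sum_star_dotProduct_mulVec_sub_comp (hσ : Function.Involutive σ)
    (f g : K → ι → R) :
    ∑ k, star (f k - f (σ k)) ⬝ᵥ A *ᵥ (g k - g (σ k)) =
      2 * ∑ k, (star (f k) ⬝ᵥ A *ᵥ g k - star (f k) ⬝ᵥ A *ᵥ g (σ k)) := by
  simp only [star_sub, mulVec_sub, dotProduct_sub, sub_dotProduct, Finset.sum_sub_distrib,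
    hσ.sum_star_dotProduct_mulVec_comp A f, hσ _]
  ring

end Involution

section IndexSwaps

variable {α β : Type*}

def swapFsts (k : (α × β) × (α × β)) : (α × β) × (α × β) := ((k.2.1, k.1.2), (k.1.1, k.2.2))

def swapSnds (k : (α × β) × (α × β)) : (α × β) × (α × β) := ((k.1.1, k.2.2), (k.2.1, k.1.2))

theorem swapFsts_involutive : Function.Involutive (swapFsts (α := α) (β := β)) := fun _ => rfl

theorem swapSnds_involutive : Function.Involutive (swapSnds (α := α) (β := β)) := fun _ => rfl

end IndexSwaps

section ConjSingle

variable {R ι : Type*} [CommRing R] [StarRing R] [Fintype ι] [DecidableEq ι]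

def conjSingle (x : ι → R) (k : ι × ι) : ι → R := Pi.single k.2 (star (x k.1))

theorem star_conjSingle_dotProduct_mulVec_conjSingle (A : Matrix ι ι R) (x : ι → R)
    (k k' : ι × ι) :
    star (conjSingle x k) ⬝ᵥ A *ᵥ conjSingle x k' = x k.1 * A k.2 k'.2 * star (x k'.1) := by
  simp [conjSingle, mulVec_single, mul_comm]

variable (A : Matrix ι ι R) (x : ι → R)

theorem sum_conjSingle_self_eq_trace_mul :
    ∑ k, star (conjSingle x k) ⬝ᵥ A *ᵥ conjSingle x k = A.trace * (star x ⬝ᵥ x) := by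
  simp_rw [star_conjSingle_dotProduct_mulVec_conjSingle]
  rw [Fintype.sum_prod_type, trace, dotProduct, Finset.sum_mul_sum, Finset.sum_comm]
  exact Finset.sum_congr rfl fun _ _ => Finset.sum_congr rfl fun _ _ => by
    simp only [diag_apply, Pi.star_apply]; ring

theorem sum_conjSingle_swap_eq_dotProduct_mulVec :
    ∑ k, star (conjSingle x k) ⬝ᵥ A *ᵥ conjSingle x k.swap = star x ⬝ᵥ A *ᵥ x := by
  simp_rw [star_conjSingle_dotProduct_mulVec_conjSingle]
  rw [Fintype.sum_prod_type, Finset.sum_comm]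
  simp only [dotProduct, mulVec, Finset.mul_sum]
  exact Finset.sum_congr rfl fun _ _ => Finset.sum_congr rfl fun _ _ => by
    simp only [Prod.fst_swap, Prod.snd_swap, Pi.star_apply]; ring

end ConjSingle

section PartialTraces

variable {m n : ℕ} (A : Matrix (Fin m × Fin n) (Fin m × Fin n) ℂ) (x : Fin m × Fin n → ℂ)

theorem sum_conjSingle_swapFsts_eq_ptrace2 :
    ∑ k, star (conjSingle x k) ⬝ᵥ A *ᵥ conjSingle x (swapFsts k) =
      star x ⬝ᵥ (ptrace2 A ⊗ₖ (1 : Matrix (Fin n) (Fin n) ℂ)) *ᵥ x := by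
  simp_rw [star_conjSingle_dotProduct_mulVec_conjSingle]
  simp only [Fintype.sum_prod_type, dotProduct, mulVec, kroneckerMap_apply, one_apply, mul_ite,
    ite_mul, mul_one, mul_zero, zero_mul, Finset.sum_ite_eq, Finset.mem_univ, if_true]
  simp only [ptrace2, of_apply, Finset.sum_mul, Finset.mul_sum, swapFsts, Pi.star_apply]
  rw [Finset.sum_congr rfl fun i _ => Finset.sum_comm, Finset.sum_comm]
  refine Finset.sum_congr rfl fun j _ => ?_
  rw [Finset.sum_comm]
  exact Finset.sum_congr rfl fun _ _ => Finset.sum_congr rfl fun _ _ =>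
    Finset.sum_congr rfl fun _ _ => by ring

theorem sum_conjSingle_swapSnds_eq_ptrace1 :
    ∑ k, star (conjSingle x k) ⬝ᵥ A *ᵥ conjSingle x (swapSnds k) =
      star x ⬝ᵥ ((1 : Matrix (Fin m) (Fin m) ℂ) ⊗ₖ ptrace1 A) *ᵥ x := by
  simp_rw [star_conjSingle_dotProduct_mulVec_conjSingle]
  simp only [Fintype.sum_prod_type, dotProduct, mulVec, kroneckerMap_apply, one_apply, ite_mul,
    one_mul, zero_mul, Finset.sum_ite_irrel, Finset.sum_const_zero, Finset.sum_ite_eq,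
    Finset.mem_univ, if_true]
  simp only [ptrace1, of_apply, Finset.sum_mul, Finset.mul_sum, swapSnds, Pi.star_apply]
  refine Finset.sum_congr rfl fun i _ => ?_
  rw [Finset.sum_congr rfl fun l _ => Finset.sum_comm, Finset.sum_comm]
  exact Finset.sum_congr rfl fun _ _ => Finset.sum_congr rfl fun _ _ =>
    Finset.sum_congr rfl fun _ _ => by ring

noncomputable def ptraceGap : Matrix (Fin m × Fin n) (Fin m × Fin n) ℂ :=
  (A.trace • (1 : Matrix (Fin m × Fin n) (Fin m × Fin n) ℂ) +
      ptrace2 A ⊗ₖ (1 : Matrix (Fin n) (Fin n) ℂ)) -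
    (A + (1 : Matrix (Fin m) (Fin m) ℂ) ⊗ₖ ptrace1 A)

def sndAntisymmVec (k : (Fin m × Fin n) × (Fin m × Fin n)) : Fin m × Fin n → ℂ :=
  conjSingle x k - conjSingle x (swapSnds k)

def ptraceGapVec (k : (Fin m × Fin n) × (Fin m × Fin n)) : Fin m × Fin n → ℂ :=
  sndAntisymmVec x k + sndAntisymmVec x (swapFsts k)

theorem dotProduct_ptraceGap_mulVec_eq_sum :
    star x ⬝ᵥ ptraceGap A *ᵥ x = (∑ k, star (ptraceGapVec x k) ⬝ᵥ A *ᵥ ptraceGapVec x k) / 4 := by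
  -- `swapFsts (swapSnds k)` is `k.swap` definitionally.
  have hcross : ∑ k, star (sndAntisymmVec x k) ⬝ᵥ A *ᵥ sndAntisymmVec x (swapFsts k) =
      2 * ∑ k, (star (conjSingle x k) ⬝ᵥ A *ᵥ conjSingle x (swapFsts k) -
        star (conjSingle x k) ⬝ᵥ A *ᵥ conjSingle x k.swap) :=
    swapSnds_involutive.sum_star_dotProduct_mulVec_sub_comp A _ (conjSingle x ∘ swapFsts)
  rw [show ∑ k, star (ptraceGapVec x k) ⬝ᵥ A *ᵥ ptraceGapVec x k = _ from
      swapFsts_involutive.sum_star_dotProduct_mulVec_add_comp A _ _, Finset.sum_add_distrib,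
    hcross, show ∑ k, star (sndAntisymmVec x k) ⬝ᵥ A *ᵥ sndAntisymmVec x k = _ from
      swapSnds_involutive.sum_star_dotProduct_mulVec_sub_comp A _ _]
  simp only [Finset.sum_sub_distrib, sum_conjSingle_self_eq_trace_mul,
    sum_conjSingle_swapFsts_eq_ptrace2, sum_conjSingle_swapSnds_eq_ptrace1,
    sum_conjSingle_swap_eq_dotProduct_mulVec, ptraceGap, sub_mulVec, add_mulVec, smul_mulVec,
    one_mulVec, dotProduct_add, dotProduct_sub, dotProduct_smul, smul_eq_mul]
  ring

end PartialTraces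

/-- Li–Liu–Huang: (tr A)·I_{mn} + (tr₂A) ⊗ I_n ≥ A + I_m ⊗ tr₁A. -/
theorem stmt13 {m n : ℕ}
    (A : Matrix (Fin m × Fin n) (Fin m × Fin n) ℂ) (hA : A.PosSemidef) :
    ((A.trace • (1 : Matrix (Fin m × Fin n) (Fin m × Fin n) ℂ) +
        ptrace2 A ⊗ₖ (1 : Matrix (Fin n) (Fin n) ℂ)) -
      (A + (1 : Matrix (Fin m) (Fin m) ℂ) ⊗ₖ ptrace1 A)).PosSemidef := by
  refine .of_forall_dotProduct_mulVec_nonneg fun x => ?_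
  rw [← ptraceGap, dotProduct_ptraceGap_mulVec_eq_sum]
  exact div_nonneg (Finset.sum_nonneg fun k _ => hA.dotProduct_mulVec_nonneg _) (by norm_num)
end

section
/- Let A ∈ M_m(M_n) be positive semidefinite and let A^τ = [A_{j,i}]_{i,j=1}^m denote its partial transpose (transposing the block structure without transposing individual blocks). Then (tr₂A^τ) ⊗ I_n ≥ A^τ and (tr₂A^τ) ⊗ I_n ≥ −A^τ in the Löwner order. -/
open Matrix BigOperators Kronecker ComplexOrder

/-- Partial transpose: transpose the block structure without transposing blocks. -/
noncomputable def ptranspose {m n : ℕ} (A : Matrix (Fin m × Fin n) (Fin m × Fin n) ℂ) :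
    Matrix (Fin m × Fin n) (Fin m × Fin n) ℂ :=
  Matrix.of fun p q => A (q.1, p.2) (p.1, q.2)

/-!
Write `A = Bᴴ B` and, for a vector `x`, let `M_k` be the `n × n` matrix
`(M_k)_{s,t} = ∑_j conj (B_{k,(j,s)}) x_{(j,t)}`. Expanding the quadratic forms gives
`x* ((tr₂ A^τ) ⊗ I) x = ∑_k ‖M_k‖²` and `x* A^τ x = ∑_k ⟨M_kᵀ, M_k⟩`. In matrix form, with `W` the
linear map `x ↦ (M_k)_k` and `F` the transposition of each `M_k`, this reads
`(tr₂ A^τ) ⊗ I = Wᴴ W` and `A^τ = Wᴴ F W`. Since `F` is a Hermitian involution, `1 ± F ≥ 0`, hence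
`(tr₂ A^τ) ⊗ I ∓ A^τ = Wᴴ (1 ∓ F) W ≥ 0`.
-/

open scoped MatrixOrder in
theorem Matrix.PosSemidef.exists_eq_conjTranspose_mul_self {ι 𝕜 : Type*} [RCLike 𝕜] [Fintype ι]
    [DecidableEq ι] {A : Matrix ι ι 𝕜} (hA : A.PosSemidef) : ∃ B : Matrix ι ι 𝕜, A = Bᴴ * B :=
  CStarAlgebra.nonneg_iff_eq_star_mul_self.mp hA.nonneg

theorem Matrix.posSemidef_one_sub_of_isHermitian_of_mul_self_eq_one {ι 𝕜 : Type*} [RCLike 𝕜]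
    [Fintype ι] [DecidableEq ι] {F : Matrix ι ι 𝕜} (hF : F.IsHermitian) (hF2 : F * F = 1) :
    (1 - F).PosSemidef := by
  have h : (1 - F)ᴴ * (1 - F) = (2 : ℝ) • (1 - F) := by
    rw [conjTranspose_sub, conjTranspose_one, hF.eq]
    simp only [sub_mul, mul_sub, one_mul, mul_one, hF2]
    module
  have := (posSemidef_conjTranspose_mul_self (1 - F)).smul (show (0 : ℝ) ≤ 1 / 2 by norm_num)
  rwa [h, smul_smul, show (1 / 2 : ℝ) * 2 = 1 by norm_num, one_smul] at this

theorem Equiv.Perm.isHermitian_permMatrix_of_involutive {ι R : Type*} [NonAssocSemiring R]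
    [StarRing R] [DecidableEq ι] {σ : Equiv.Perm ι} (hσ : Function.Involutive σ) :
    (σ.permMatrix R).IsHermitian := by
  rw [IsHermitian, conjTranspose_permMatrix, Equiv.Perm.inv_def,
    Function.Involutive.symm_eq_self_of_involutive σ hσ]

theorem Equiv.Perm.permMatrix_mul_self_of_involutive {ι R : Type*} [NonAssocSemiring R]
    [DecidableEq ι] [Fintype ι] {σ : Equiv.Perm ι} (hσ : Function.Involutive σ) :
    σ.permMatrix R * σ.permMatrix R = 1 := by
  rw [← permMatrix_mul, show σ * σ = 1 from Equiv.ext hσ, permMatrix_one]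

section choiFactor

variable {κ : Type*} [Fintype κ] {m n : ℕ}

noncomputable def choiFactor (B : Matrix κ (Fin m × Fin n) ℂ) :
    Matrix (κ × Fin n × Fin n) (Fin m × Fin n) ℂ :=
  of fun r p => if r.2.2 = p.2 then star (B r.1 (p.1, r.2.1)) else 0

def swapLastTwo (κ : Type*) (n : ℕ) : Equiv.Perm (κ × Fin n × Fin n) :=
  Equiv.prodCongr (Equiv.refl κ) (Equiv.prodComm _ _)

theorem conjTranspose_choiFactor_mul_self (B : Matrix κ (Fin m × Fin n) ℂ) :
    (choiFactor B)ᴴ * choiFactor B = ptrace2 (ptranspose (Bᴴ * B)) ⊗ₖ 1 := by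
  ext p q
  simp only [choiFactor, ptrace2, ptranspose, mul_apply, conjTranspose_apply, of_apply,
    kroneckerMap_apply, one_apply, Fintype.sum_prod_type]
  split_ifs with h
  · rw [Finset.sum_comm]
    simp [h, mul_comm]
  · simp [Ne.symm h]

theorem conjTranspose_choiFactor_mul_swap [DecidableEq κ] (B : Matrix κ (Fin m × Fin n) ℂ) :
    (choiFactor B)ᴴ * (swapLastTwo κ n).permMatrix ℂ * choiFactor B =
      ptranspose (Bᴴ * B) := by
  rw [Matrix.mul_assoc, PEquiv.toMatrix_toPEquiv_mul]
  ext p q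
  simp [choiFactor, swapLastTwo, ptranspose, mul_apply, Fintype.sum_prod_type,
    apply_ite, mul_comm]

end choiFactor

/-- Choi's lemma: (tr₂A^τ) ⊗ I_n ≥ ± A^τ. -/
theorem stmt14 {m n : ℕ}
    (A : Matrix (Fin m × Fin n) (Fin m × Fin n) ℂ) (hA : A.PosSemidef) :
    (ptrace2 (ptranspose A) ⊗ₖ (1 : Matrix (Fin n) (Fin n) ℂ) -
      ptranspose A).PosSemidef ∧
    (ptrace2 (ptranspose A) ⊗ₖ (1 : Matrix (Fin n) (Fin n) ℂ) +
      ptranspose A).PosSemidef := by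
  obtain ⟨B, rfl⟩ := hA.exists_eq_conjTranspose_mul_self
  set F := (swapLastTwo (Fin m × Fin n) n).permMatrix ℂ
  have hF : F.IsHermitian := Equiv.Perm.isHermitian_permMatrix_of_involutive fun _ => rfl
  have hF2 : F * F = 1 := Equiv.Perm.permMatrix_mul_self_of_involutive fun _ => rfl
  rw [← conjTranspose_choiFactor_mul_self, ← conjTranspose_choiFactor_mul_swap]
  set W := choiFactor B
  constructor
  · have hOneSub := posSemidef_one_sub_of_isHermitian_of_mul_self_eq_one hF hF2
    simpa only [Matrix.mul_sub, Matrix.sub_mul, Matrix.mul_one] using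
      hOneSub.conjTranspose_mul_mul_same W
  · have hOneSub := posSemidef_one_sub_of_isHermitian_of_mul_self_eq_one hF.neg (by simpa using hF2)
    simpa only [sub_neg_eq_add, Matrix.mul_add, Matrix.add_mul, Matrix.mul_one] using
      hOneSub.conjTranspose_mul_mul_same W
end

section
/- Let X, Y, W, Z be positive semidefinite matrices of the same order with X ≥ W, X ≥ Z, and X + Y ≥ W + Z (Löwner order). Then det X + det Y ≥ det W + det Z. -/
/-!
Put `H = W + Z - X`. If `det W + det Z ≤ det X` there is nothing to prove, since `det Y ≥ 0`; this
covers singular `X`, where `det W ≤ det X = 0` and likewise for `Z`. Otherwise `X` is positive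
definite, and `0 ≤ W ≤ X` gives `(det W) X ≤ (det X) W`: by a congruence `X = 1`, and then `det W`
is a product of eigenvalues in `[0, 1]`, hence at most each of them. Adding the same inequality for
`Z` shows that `H` is positive definite. Supermodularity of the determinant at `H`, with increments
`X - W` and `X - Z`, gives `det W + det Z ≤ det X + det H`, and `det H ≤ det Y` because `H ≤ Y`.

Supermodularity reduces by a congruence to `H = 1`, where it holds term by term in the expansion
`det (1 + A) = ∑ₛ det A[s]` into principal minors, by superadditivity of `det` on positive
semidefinite matrices.
-/

open Matrix
open scoped MatrixOrder ComplexOrder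

theorem IsUnit.exists_eq_star_mul_mul {R : Type*} [Monoid R] [StarMul R] {u : R} (hu : IsUnit u)
    (a : R) : ∃ b, a = star u * b * u := by
  obtain ⟨u, rfl⟩ := hu
  refine ⟨star (↑u⁻¹ : R) * a * ↑u⁻¹, ?_⟩
  simp [← star_mul, ← mul_assoc]

theorem IsUnit.star_left_conjugate_le_conjugate_iff {R : Type*} [Ring R] [StarRing R]
    [PartialOrder R] [StarOrderedRing R] {u : R} (hu : IsUnit u) {a b : R} :
    star u * a * u ≤ star u * b * u ↔ a ≤ b := by
  rw [← sub_nonneg, ← sub_mul, ← mul_sub, hu.star_left_conjugate_nonneg_iff, sub_nonneg]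

theorem star_mul_self_add_star_mul_mul {R : Type*} [Semiring R] [Star R] (u a : R) :
    star u * u + star u * a * u = star u * (1 + a) * u := by
  rw [mul_add, add_mul, mul_one]

namespace Matrix

section PrincipalMinor

variable {R n : Type*} [CommRing R] [DecidableEq n]

def principalMinor (A : Matrix n n R) (s : Finset n) : R :=
  (A.submatrix ((↑) : s → n) (↑)).det

@[simp]
theorem principalMinor_empty (A : Matrix n n R) : A.principalMinor ∅ = 1 :=
  det_isEmpty

variable [Fintype n]

@[simp]
theorem principalMinor_univ (A : Matrix n n R) : A.principalMinor Finset.univ = A.det :=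
  det_submatrix_equiv_self (Equiv.subtypeUnivEquiv Finset.mem_univ) A

theorem det_one_add_eq_sum_principalMinor (A : Matrix n n R) :
    (1 + A).det = ∑ s, A.principalMinor s := by
  rw [add_comm]
  exact ((detRowAlternating : (n → R) [⋀^n]→ₗ[R] R).map_add_univ A.row (row 1)).trans
    (Finset.sum_congr rfl fun s _ => det_piecewise_one_eq_submatrix_det A s)

end PrincipalMinor

variable {n 𝕜 : Type*} [DecidableEq n] [RCLike 𝕜]

theorem re_det_nonneg [Fintype n] {A : Matrix n n 𝕜} (hA : 0 ≤ A) : 0 ≤ RCLike.re A.det :=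
  RCLike.nonneg_iff.mp hA.posSemidef.det_nonneg |>.1

theorem re_principalMinor_nonneg {A : Matrix n n 𝕜} (hA : 0 ≤ A) (s : Finset n) :
    0 ≤ RCLike.re (A.principalMinor s) :=
  re_det_nonneg (hA.posSemidef.submatrix _).nonneg

variable [Fintype n]

theorem re_det_eq_zero_of_not_posDef {A : Matrix n n 𝕜} (hA : 0 ≤ A) (hA' : ¬A.PosDef) :
    RCLike.re A.det = 0 := by
  rw [not_ne_iff.mp (hA.posSemidef.posDef_iff_det_ne_zero.not.mp hA'), map_zero]

theorem re_det_star_mul_mul (S M : Matrix n n 𝕜) :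
    RCLike.re (star S * M * S).det = ‖S.det‖ ^ 2 * RCLike.re M.det := by
  rw [det_mul, det_mul, star_eq_conjTranspose, det_conjTranspose, mul_comm _ S.det, ← mul_assoc,
    RCLike.star_def, RCLike.mul_conj]
  norm_cast
  exact RCLike.re_ofReal_mul _ _

theorem re_det_star_mul_self (S : Matrix n n 𝕜) : RCLike.re (star S * S).det = ‖S.det‖ ^ 2 := by
  simpa using re_det_star_mul_mul S 1

theorem PosDef.exists_isUnit_eq_star_mul_self {A : Matrix n n 𝕜} (hA : A.PosDef) :
    ∃ S : Matrix n n 𝕜, IsUnit S ∧ A = star S * S := by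
  obtain ⟨S, rfl⟩ := CStarAlgebra.nonneg_iff_eq_star_mul_self.mp hA.posSemidef.nonneg
  refine ⟨S, ?_, rfl⟩
  rw [isUnit_iff_isUnit_det]
  have := (isUnit_iff_isUnit_det _).mp hA.isUnit
  rw [det_mul] at this
  exact isUnit_of_mul_isUnit_right this

theorem re_det_one_add_eq_sum (A : Matrix n n 𝕜) :
    RCLike.re (1 + A).det = ∑ s, RCLike.re (A.principalMinor s) := by
  rw [det_one_add_eq_sum_principalMinor, map_sum]

theorem one_le_re_det_one_add {A : Matrix n n 𝕜} (hA : 0 ≤ A) : 1 ≤ RCLike.re (1 + A).det := by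
  rw [re_det_one_add_eq_sum]
  simpa using Finset.single_le_sum (fun s _ => re_principalMinor_nonneg hA s) (Finset.mem_univ ∅)

theorem one_add_re_det_le_re_det_one_add [Nonempty n] {A : Matrix n n 𝕜} (hA : 0 ≤ A) :
    1 + RCLike.re A.det ≤ RCLike.re (1 + A).det := by
  have := Finset.sum_le_sum_of_subset_of_nonneg (Finset.subset_univ {∅, Finset.univ})
    fun s _ _ => re_principalMinor_nonneg hA s
  rwa [Finset.sum_pair Finset.univ_nonempty.ne_empty.symm, principalMinor_empty,
    principalMinor_univ, RCLike.one_re, ← re_det_one_add_eq_sum] at this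

theorem re_det_mono {A B : Matrix n n 𝕜} (hA : 0 ≤ A) (hAB : A ≤ B) :
    RCLike.re A.det ≤ RCLike.re B.det := by
  by_cases hApd : A.PosDef
  · obtain ⟨S, hS, rfl⟩ := hApd.exists_isUnit_eq_star_mul_self
    obtain ⟨M, hM⟩ := hS.exists_eq_star_mul_mul (B - star S * S)
    have hM0 : 0 ≤ M := by rwa [← hS.star_left_conjugate_nonneg_iff, ← hM, sub_nonneg]
    rw [← add_sub_cancel (star S * S) B, hM, star_mul_self_add_star_mul_mul, re_det_star_mul_mul,
      re_det_star_mul_self]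
    exact le_mul_of_one_le_right (sq_nonneg _) (one_le_re_det_one_add hM0)
  · rw [re_det_eq_zero_of_not_posDef hA hApd]
    exact re_det_nonneg (hA.trans hAB)

theorem re_det_add_re_det_le [Nonempty n] {P Q : Matrix n n 𝕜} (hP : 0 ≤ P) (hQ : 0 ≤ Q) :
    RCLike.re P.det + RCLike.re Q.det ≤ RCLike.re (P + Q).det := by
  by_cases hPpd : P.PosDef
  · obtain ⟨S, hS, rfl⟩ := hPpd.exists_isUnit_eq_star_mul_self
    obtain ⟨M, rfl⟩ := hS.exists_eq_star_mul_mul Q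
    rw [star_mul_self_add_star_mul_mul, re_det_star_mul_mul, re_det_star_mul_mul,
      re_det_star_mul_self, ← mul_one_add]
    exact mul_le_mul_of_nonneg_left
      (one_add_re_det_le_re_det_one_add (hS.star_left_conjugate_nonneg_iff.mp hQ)) (sq_nonneg _)
  · rw [re_det_eq_zero_of_not_posDef hP hPpd, zero_add]
    exact re_det_mono hQ (le_add_of_nonneg_left hP)

theorem re_det_one_add_add_re_det_one_add_le {P Q : Matrix n n 𝕜} (hP : 0 ≤ P) (hQ : 0 ≤ Q) :
    RCLike.re (1 + P).det + RCLike.re (1 + Q).det ≤ RCLike.re (1 + (P + Q)).det + 1 := by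
  -- superadditivity fails for the empty minor (`1 + 1 > 1`); the extra `1` pays for it
  simp only [re_det_one_add_eq_sum, ← Finset.add_sum_erase _ _ (Finset.mem_univ ∅),
    principalMinor_empty, RCLike.one_re]
  have hrest : ∑ s ∈ Finset.univ.erase ∅, RCLike.re (P.principalMinor s) +
      ∑ s ∈ Finset.univ.erase ∅, RCLike.re (Q.principalMinor s) ≤
      ∑ s ∈ Finset.univ.erase ∅, RCLike.re ((P + Q).principalMinor s) := by
    rw [← Finset.sum_add_distrib]
    refine Finset.sum_le_sum fun s hs => ?_
    have : Nonempty s := (Finset.nonempty_iff_ne_empty.mpr (Finset.ne_of_mem_erase hs)).to_subtype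
    exact re_det_add_re_det_le (hP.posSemidef.submatrix _).nonneg (hQ.posSemidef.submatrix _).nonneg
  linarith

theorem re_det_add_add_re_det_add_le {H P Q : Matrix n n 𝕜} (hH : H.PosDef) (hP : 0 ≤ P)
    (hQ : 0 ≤ Q) :
    RCLike.re (H + P).det + RCLike.re (H + Q).det ≤
      RCLike.re (H + P + Q).det + RCLike.re H.det := by
  obtain ⟨S, hS, rfl⟩ := hH.exists_isUnit_eq_star_mul_self
  obtain ⟨P, rfl⟩ := hS.exists_eq_star_mul_mul P
  obtain ⟨Q, rfl⟩ := hS.exists_eq_star_mul_mul Q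
  rw [add_assoc, ← add_mul (star S * P), ← mul_add (star S) P]
  simp only [star_mul_self_add_star_mul_mul, re_det_star_mul_mul, re_det_star_mul_self, ← mul_add,
    ← mul_add_one]
  exact mul_le_mul_of_nonneg_left (re_det_one_add_add_re_det_one_add_le
    (hS.star_left_conjugate_nonneg_iff.mp hP) (hS.star_left_conjugate_nonneg_iff.mp hQ))
    (sq_nonneg _)

theorem re_det_smul_one_le {A : Matrix n n 𝕜} (h0 : 0 ≤ A) (h1 : A ≤ 1) :
    RCLike.re A.det • (1 : Matrix n n 𝕜) ≤ A := by
  have hA := h0.posSemidef.isHermitian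
  have hle : ∀ i, hA.eigenvalues i ≤ 1 := by
    rw [← map_one (algebraMap ℝ (Matrix n n 𝕜)), le_algebraMap_iff_spectrum_le,
      hA.spectrum_real_eq_range_eigenvalues] at h1
    exact fun i => h1 _ ⟨i, rfl⟩
  rw [← Algebra.algebraMap_eq_smul_one, algebraMap_le_iff_le_spectrum,
    hA.spectrum_real_eq_range_eigenvalues]
  rintro _ ⟨i, rfl⟩
  rw [hA.det_eq_prod_eigenvalues, ← RCLike.ofReal_prod, RCLike.ofReal_re,
    ← Finset.mul_prod_erase _ _ (Finset.mem_univ i)]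
  exact mul_le_of_le_one_right (h0.posSemidef.eigenvalues_nonneg i)
    (Finset.prod_le_one (fun j _ => h0.posSemidef.eigenvalues_nonneg j) fun j _ => hle j)

theorem re_det_smul_le_re_det_smul {X W : Matrix n n 𝕜} (hX : X.PosDef) (hW : 0 ≤ W)
    (hWX : W ≤ X) : RCLike.re W.det • X ≤ RCLike.re X.det • W := by
  obtain ⟨S, hS, rfl⟩ := hX.exists_isUnit_eq_star_mul_self
  obtain ⟨W, rfl⟩ := hS.exists_eq_star_mul_mul W
  have hW1 : W ≤ 1 := hS.star_left_conjugate_le_conjugate_iff.mp (by rwa [mul_one])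
  have key := hS.star_left_conjugate_le_conjugate_iff.mpr
    (re_det_smul_one_le (hS.star_left_conjugate_nonneg_iff.mp hW) hW1)
  rw [mul_smul_comm, smul_mul_assoc, mul_one] at key
  rw [re_det_star_mul_mul, re_det_star_mul_self, mul_smul]
  exact smul_le_smul_of_nonneg_left key (sq_nonneg ‖S.det‖)

theorem posDef_add_sub_of_re_det_lt {X W Z : Matrix n n 𝕜} (hX : X.PosDef) (hW : 0 ≤ W)
    (hZ : 0 ≤ Z) (hWX : W ≤ X) (hZX : Z ≤ X)
    (hlt : RCLike.re X.det < RCLike.re W.det + RCLike.re Z.det) : (W + Z - X).PosDef := by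
  have hdX : 0 < RCLike.re X.det := (RCLike.pos_iff.mp hX.det_pos).1
  have hsum : (RCLike.re W.det + RCLike.re Z.det) • X ≤ RCLike.re X.det • (W + Z) := by
    rw [add_smul, smul_add]
    exact add_le_add (re_det_smul_le_re_det_smul hX hW hWX) (re_det_smul_le_re_det_smul hX hZ hZX)
  have hsplit : RCLike.re X.det • (W + Z - X) =
      (RCLike.re X.det • (W + Z) - (RCLike.re W.det + RCLike.re Z.det) • X) +
        (RCLike.re W.det + RCLike.re Z.det - RCLike.re X.det) • X := by
    module
  have hscaled : (RCLike.re X.det • (W + Z - X)).PosDef := by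
    rw [hsplit]
    exact PosDef.posSemidef_add (sub_nonneg.mpr hsum).posSemidef (hX.smul (sub_pos.mpr hlt))
  simpa [smul_smul, inv_mul_cancel₀ hdX.ne'] using hscaled.smul (inv_pos.mpr hdX)

end Matrix

/-- Lin's determinant lemma. -/
theorem stmt15 {n : ℕ} (X Y W Z : Matrix (Fin n) (Fin n) ℂ)
    (hX : X.PosSemidef) (hY : Y.PosSemidef) (hW : W.PosSemidef) (hZ : Z.PosSemidef)
    (hXW : (X - W).PosSemidef) (hXZ : (X - Z).PosSemidef)
    (hXY : ((X + Y) - (W + Z)).PosSemidef) :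
    X.det.re + Y.det.re ≥ W.det.re + Z.det.re := by
  have hY0 : 0 ≤ Y.det.re := re_det_nonneg hY.nonneg
  by_cases hXpd : X.PosDef
  · by_cases hle : W.det.re + Z.det.re ≤ X.det.re
    · linarith
    have hH : (W + Z - X).PosDef :=
      posDef_add_sub_of_re_det_lt hXpd hW.nonneg hZ.nonneg hXW hXZ (not_le.mp hle)
    have hsup : W.det.re + Z.det.re ≤ X.det.re + (W + Z - X).det.re := by
      have := re_det_add_add_re_det_add_le hH hXW.nonneg hXZ.nonneg
      rwa [show W + Z - X + (X - W) = Z by abel, show W + Z - X + (X - Z) = W by abel,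
        show Z + (X - Z) = X by abel, add_comm (RCLike.re Z.det)] at this
    have hHY : (W + Z - X).det.re ≤ Y.det.re := re_det_mono hH.posSemidef.nonneg <| by
      rwa [le_iff, show Y - (W + Z - X) = X + Y - (W + Z) by abel]
    linarith
  · have hX0 : X.det.re = 0 := re_det_eq_zero_of_not_posDef hX.nonneg hXpd
    have hWX : W.det.re ≤ X.det.re := re_det_mono hW.nonneg hXW
    have hZX : Z.det.re ≤ X.det.re := re_det_mono hZ.nonneg hXZ
    linarith
end

section
/- Let A, B, C be positive semidefinite matrices of the same order. Then det(A + B + C) + det C ≥ det(A + C) + det(B + C). -/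
/-!
Diagonalise `A = U D Uᴴ` with `D = diagonal d`, `d ≥ 0`; conjugating by the unitary `U` keeps
`B` and `C` positive semidefinite and all determinants unchanged, so `A` may be taken diagonal,
i.e. a sum of the rank-one steps `dᵢ Eᵢᵢ`. By linearity of `det` in row `i`,
`det (Y + c Eᵢᵢ) = det Y + c · det Y₍ᵢ₎`, where `Y₍ᵢ₎` deletes row and column `i`. Hence each step
raises `det (Y + B) - det Y` by `c (det (Y + B)₍ᵢ₎ - det Y₍ᵢ₎) ≥ 0`, which is the monotonicity of
`det` on positive semidefinite matrices; that monotonicity follows from the same step argument,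
since principal minors of positive semidefinite matrices are nonnegative.
-/

open scoped ComplexOrder

namespace Matrix

section CommRing

variable {n R : Type*} [Fintype n] [DecidableEq n] [CommRing R]

theorem det_updateRow_single_one (Y : Matrix n n R) (i : n) :
    (Y.updateRow i (Pi.single i 1)).det =
      (Y.submatrix ((↑) : {j // j ≠ i} → n) (↑)).det := by
  rw [← det_submatrix_equiv_self (Equiv.sumCompl (· = i))]
  have hblocks : (Y.updateRow i (Pi.single i 1)).submatrix (Equiv.sumCompl (· = i))
      (Equiv.sumCompl (· = i)) =
      fromBlocks 1 0 ((Y.updateRow i (Pi.single i 1)).submatrix (↑) (↑))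
        (Y.submatrix ((↑) : {j // j ≠ i} → n) (↑)) := by
    ext (⟨j, rfl⟩ | ⟨j, hj⟩) (⟨k, hk⟩ | ⟨k, hk⟩)
    all_goals simp [updateRow_apply, *]
  rw [hblocks, det_fromBlocks_zero₁₂, det_one, one_mul]

theorem det_add_diagonal_single (Y : Matrix n n R) (i : n) (c : R) :
    (Y + diagonal (Pi.single i c)).det =
      Y.det + c * (Y.submatrix ((↑) : {j // j ≠ i} → n) (↑)).det := by
  have hrow : Y + diagonal (Pi.single i c) = Y.updateRow i (Y i + c • Pi.single i 1) := by
    ext j k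
    rcases eq_or_ne j i with rfl | hj
    · simp [diagonal_apply, Pi.single_apply, eq_comm]
    · simp [hj, diagonal_apply]
  rw [hrow, det_updateRow_add, updateRow_eq_self, det_updateRow_smul, det_updateRow_single_one]

variable [StarRing R] {U : Matrix n n R}

theorem det_star_mul_mul_of_mem_unitaryGroup (hU : U ∈ unitaryGroup n R) (X : Matrix n n R) :
    (star U * X * U).det = X.det :=
  det_conj_of_mul_eq_one (Unitary.star_mul_self_of_mem hU) (Unitary.mul_star_self_of_mem hU)

theorem det_add_mul_mul_star_of_mem_unitaryGroup (hU : U ∈ unitaryGroup n R)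
    (X D : Matrix n n R) : (X + U * D * star U).det = (star U * X * U + D).det := by
  have hUU := Unitary.star_mul_self_of_mem hU
  rw [← det_star_mul_mul_of_mem_unitaryGroup hU, mul_add, add_mul]
  congr 2
  rw [← mul_assoc, ← mul_assoc, hUU, one_mul, mul_assoc, hUU, mul_one]

end CommRing

section RCLike

variable {n 𝕜 : Type*} [Fintype n] [DecidableEq n] [RCLike 𝕜]

theorem IsHermitian.det_add_eq_det_conj_add_diagonal {A : Matrix n n 𝕜} (hA : A.IsHermitian)
    (X : Matrix n n 𝕜) :
    (X + A).det = (star (hA.eigenvectorUnitary : Matrix n n 𝕜) * X *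
      (hA.eigenvectorUnitary : Matrix n n 𝕜) + diagonal (RCLike.ofReal ∘ hA.eigenvalues)).det := by
  conv_lhs => rw [hA.spectral_theorem, Unitary.conjStarAlgAut_apply,
    det_add_mul_mul_star_of_mem_unitaryGroup hA.eigenvectorUnitary.2]

theorem PosSemidef.le_apply_add_diagonal_of_le_apply_add_single {g : Matrix n n 𝕜 → 𝕜}
    (hg : ∀ Z : Matrix n n 𝕜, Z.PosSemidef → ∀ i, ∀ c : ℝ, 0 ≤ c →
      g Z ≤ g (Z + diagonal (Pi.single i (c : 𝕜))))
    {Y : Matrix n n 𝕜} (hY : Y.PosSemidef) {d : n → ℝ} (hd : 0 ≤ d) :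
    g Y ≤ g (Y + diagonal (RCLike.ofReal ∘ d)) := by
  set E : n → Matrix n n 𝕜 := fun i => diagonal (Pi.single i (d i : 𝕜))
  have hE : ∀ i, (E i).PosSemidef := fun i =>
    .diagonal fun j => by
      rcases eq_or_ne j i with rfl | hj
      · simpa using hd j
      · simp [hj]
  have hsum : diagonal (RCLike.ofReal ∘ d) = ∑ i, E i := by
    ext j k
    simp [E, diagonal_apply, Matrix.sum_apply, Pi.single_apply]
  rw [hsum]
  induction (Finset.univ : Finset n) using Finset.induction_on with
  | empty => simp
  | insert a s ha ih =>
    have hpart : (Y + ∑ i ∈ s, E i).PosSemidef := hY.add (posSemidef_sum _ fun i _ => hE i)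
    calc g Y ≤ g (Y + ∑ i ∈ s, E i) := ih
      _ ≤ g (Y + ∑ i ∈ s, E i + E a) := hg _ hpart a (d a) (hd a)
      _ = g (Y + ∑ i ∈ insert a s, E i) := by rw [Finset.sum_insert ha, add_comm (E a), add_assoc]

theorem PosSemidef.det_le_det_add_s16 {Y A : Matrix n n 𝕜} (hY : Y.PosSemidef) (hA : A.PosSemidef) :
    Y.det ≤ (Y + A).det := by
  rw [hA.1.det_add_eq_det_conj_add_diagonal,
    ← det_star_mul_mul_of_mem_unitaryGroup hA.1.eigenvectorUnitary.2 Y]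
  refine (hY.conjTranspose_mul_mul_same _).le_apply_add_diagonal_of_le_apply_add_single
    (fun Z hZ i c hc => ?_) hA.eigenvalues_nonneg
  rw [det_add_diagonal_single]
  exact le_add_of_nonneg_right (mul_nonneg (by exact_mod_cast hc) (hZ.submatrix _).det_nonneg)

theorem PosSemidef.det_add_sub_det_le_det_add_add_sub_det_add {Y A B : Matrix n n 𝕜}
    (hY : Y.PosSemidef) (hA : A.PosSemidef) (hB : B.PosSemidef) :
    (Y + B).det - Y.det ≤ (Y + A + B).det - (Y + A).det := by
  set U : Matrix n n 𝕜 := (hA.1.eigenvectorUnitary : Matrix n n 𝕜)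
  have hU : U ∈ unitaryGroup n 𝕜 := hA.1.eigenvectorUnitary.2
  set B' := star U * B * U
  have hB' : B'.PosSemidef := hB.conjTranspose_mul_mul_same U
  have hYB : star U * (Y + B) * U = star U * Y * U + B' := by rw [mul_add, add_mul]
  rw [add_right_comm, hA.1.det_add_eq_det_conj_add_diagonal, hA.1.det_add_eq_det_conj_add_diagonal,
    ← det_star_mul_mul_of_mem_unitaryGroup hU (Y + B), ← det_star_mul_mul_of_mem_unitaryGroup hU Y,
    hYB, add_right_comm _ B']
  refine (hY.conjTranspose_mul_mul_same U).le_apply_add_diagonal_of_le_apply_add_single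
    (g := fun Z => (Z + B').det - Z.det) (fun Z hZ i c hc => ?_) hA.eigenvalues_nonneg
  have hminor := mul_le_mul_of_nonneg_left
    ((hZ.submatrix ((↑) : {j // j ≠ i} → n)).det_le_det_add_s16 (hB'.submatrix (↑)))
    (by exact_mod_cast hc : (0 : 𝕜) ≤ c)
  rw [add_right_comm, det_add_diagonal_single, det_add_diagonal_single, submatrix_add]
  linear_combination hminor

end RCLike

end Matrix

/-- det(A+B+C) + det C ≥ det(A+C) + det(B+C) for PSD A, B, C. -/
theorem stmt16 {n : ℕ} (A B C : Matrix (Fin n) (Fin n) ℂ)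
    (hA : A.PosSemidef) (hB : B.PosSemidef) (hC : C.PosSemidef) :
    (A + B + C).det.re + C.det.re ≥ (A + C).det.re + (B + C).det.re := by
  have key := Complex.le_def.mp (sub_le_sub_iff.mp
    (hC.det_add_sub_det_le_det_add_add_sub_det_add hA hB))
  simp only [Complex.add_re] at key
  rw [show A + B + C = C + A + B by abel, add_comm A, add_comm B]
  linarith [key.1]
end

section
/- Let [[A, B],[B*, C]] be a positive semidefinite 2×2 block matrix with k×k blocks. Then for every positive integer r, (tr A · tr C)^r − (tr B* · tr B)^r ≥ |(tr(AC))^r − (tr(B*B))^r|, and also (tr A · tr C)^r + (tr B* · tr B)^r ≥ (tr(AC))^r + (tr(B*B))^r. -/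
open Matrix BigOperators ComplexOrder

/-! Write `M = Nᴴ N` and split `N` into column blocks `P`, `Q`, so that `A = PᴴP`, `B = PᴴQ`,
`C = QᴴQ`. The numbers `tr A tr C`, `|tr B|²`, `tr (AC)`, `tr (BᴴB)` are the inner products
`⟪T, gT⟫` of `T = vec (P ⊗ₖ Q)` with its images under the four coordinate permutations generated by
swapping the two row indices and swapping the two column indices of `P ⊗ₖ Q`. For commuting
isometric involutions `σ, τ`, Cauchy–Schwarz for `x - σx` and `τ (x - σx)` gives
`re⟪x, σx⟫ + re⟪x, τx⟫ ≤ ‖x‖² + re⟪x, στx⟫`, and the three choices of `(σ, τ)` give the case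
`r = 1`: `tr (AC) + tr (BᴴB) ≤ tr A tr C + |tr B|²` and
`|tr (AC) - tr (BᴴB)| ≤ tr A tr C - |tr B|²`. These are majorization statements about pairs of
nonnegative reals, so they persist under the convex increasing map `x ↦ x ^ r`. -/

theorem LinearIsometryEquiv.re_inner_add_re_inner_le {𝕜 E : Type*} [RCLike 𝕜]
    [NormedAddCommGroup E] [InnerProductSpace 𝕜 E] (σ τ ρ : E ≃ₗᵢ[𝕜] E)
    (hσ : ∀ x, σ (σ x) = x) (hστ : ∀ x, σ (τ x) = ρ x) (hτσ : ∀ x, τ (σ x) = ρ x) (x : E) :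
    RCLike.re (inner 𝕜 x (σ x)) + RCLike.re (inner 𝕜 x (τ x)) ≤
      ‖x‖ ^ 2 + RCLike.re (inner 𝕜 x (ρ x)) := by
  have hcs : RCLike.re (inner 𝕜 (x - σ x) (τ (x - σ x))) ≤ ‖x - σ x‖ ^ 2 := by
    simpa only [τ.norm_map, sq] using re_inner_le_norm (𝕜 := 𝕜) (x - σ x) (τ (x - σ x))
  have hnorm : ‖x - σ x‖ ^ 2 = 2 * (‖x‖ ^ 2 - RCLike.re (inner 𝕜 x (σ x))) := by
    rw [@norm_sub_sq 𝕜, σ.norm_map]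
    ring
  have hinner : inner 𝕜 (x - σ x) (τ (x - σ x)) = 2 * (inner 𝕜 x (τ x) - inner 𝕜 x (ρ x)) := by
    have h : inner 𝕜 (σ x) (τ x) = inner 𝕜 x (ρ x) := by
      rw [← σ.inner_map_map, hσ, hστ]
    simp only [LinearIsometryEquiv.map_sub, inner_sub_left, inner_sub_right, hτσ, ← hστ, h,
      σ.inner_map_map]
    ring
  rw [hinner, hnorm] at hcs
  simp only [RCLike.ofNat_mul_re, _root_.map_sub] at hcs
  linarith

section Convex

open Set

variable {s : Set ℝ} {f : ℝ → ℝ}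

theorem ConvexOn.map_add_map_le_of_add_eq (hf : ConvexOn ℝ s f) {a b c d : ℝ} (ha : a ∈ s)
    (hd : d ∈ s) (hb : b ∈ Icc a d) (hc : c ∈ Icc a d) (h : b + c = a + d) :
    f b + f c ≤ f a + f d := by
  have secant : ∀ y ∈ Icc a d, (d - a) * f y ≤ (d - y) * f a + (y - a) * f d := by
    rintro y ⟨hay, hyd⟩
    rcases hay.eq_or_lt with rfl | hay
    · simp
    rcases hyd.eq_or_lt with rfl | hyd
    · simp
    exact hf.secant_mono_aux1 ha hd hay hyd
  rcases (hb.1.trans hb.2).eq_or_lt with had | had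
  · rw [le_antisymm (had ▸ hb.2) hb.1, le_antisymm (had ▸ hc.2) hc.1, had]
  · refine le_of_mul_le_mul_left ?_ (sub_pos.2 had)
    linear_combination secant b hb + secant c hc + (f d - f a) * h

theorem ConvexOn.map_add_map_le_of_le_of_add_le (hf : ConvexOn ℝ s f) (hmono : MonotoneOn f s)
    {x₁ x₂ y₁ y₂ : ℝ} (hx₁ : x₁ ∈ s) (hx₂ : x₂ ∈ s) (hy₁ : y₁ ∈ s) (hy₂ : y₂ ∈ s)
    (h₁ : y₁ ≤ x₁) (h₂ : y₂ ≤ x₁) (h : y₁ + y₂ ≤ x₁ + x₂) : f y₁ + f y₂ ≤ f x₁ + f x₂ := by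
  wlog hy : y₂ ≤ y₁ generalizing y₁ y₂
  · rw [add_comm]
    exact this hy₂ hy₁ h₂ h₁ (by linarith) (le_of_not_ge hy)
  rcases le_or_gt y₂ x₂ with hx | hx
  · exact add_le_add (hmono hy₁ hx₁ h₁) (hmono hy₂ hx₂ hx)
  · -- move `y₂` down to `x₂` and `y₁` up by the same amount
    set z := y₁ + (y₂ - x₂)
    have hz : z ∈ s := hf.1.ordConnected.out hy₁ hx₁ ⟨by linarith, by linarith⟩
    have hconv := hf.map_add_map_le_of_add_eq hx₂ hz (b := y₂) (c := y₁)
      ⟨hx.le, by linarith⟩ ⟨by linarith, by linarith⟩ (by ring)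
    linarith [hmono hz hx₁ (by linarith : z ≤ x₁)]

theorem ConvexOn.map_add_map_le_and_abs_map_sub_map_le (hf : ConvexOn ℝ s f)
    (hmono : MonotoneOn f s) {a b c d : ℝ} (ha : a ∈ s) (hb : b ∈ s) (hc : c ∈ s) (hd : d ∈ s)
    (hsum : c + d ≤ a + b) (hdiff : |c - d| ≤ a - b) :
    f c + f d ≤ f a + f b ∧ |f c - f d| ≤ f a - f b := by
  rw [abs_sub_le_iff] at hdiff ⊢
  have hca : c ≤ a := by linarith
  have hda : d ≤ a := by linarith
  have hba : b ≤ a := by linarith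
  refine ⟨hf.map_add_map_le_of_le_of_add_le hmono ha hb hc hd hca hda hsum, ?_, ?_⟩
  · linarith [hf.map_add_map_le_of_le_of_add_le hmono ha hd hc hb hca hba (by linarith)]
  · linarith [hf.map_add_map_le_of_le_of_add_le hmono ha hc hd hb hda hba (by linarith)]

end Convex

namespace Matrix

variable {𝕜 m n : Type*} [RCLike 𝕜]

section

variable [Fintype m] [Fintype n]

theorem PosSemidef.exists_eq_conjTranspose_mul_of_fromBlocks [DecidableEq m] [DecidableEq n]
    {A : Matrix m m 𝕜} {B : Matrix m n 𝕜} {D : Matrix n n 𝕜}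
    (h : (fromBlocks A B Bᴴ D).PosSemidef) :
    ∃ (P : Matrix (m ⊕ n) m 𝕜) (Q : Matrix (m ⊕ n) n 𝕜),
      A = Pᴴ * P ∧ B = Pᴴ * Q ∧ D = Qᴴ * Q := by
  open scoped MatrixOrder in
  obtain ⟨N, hN⟩ := CStarAlgebra.nonneg_iff_eq_star_mul_self.mp h.nonneg
  refine ⟨N.toCols₁, N.toCols₂, ?_⟩
  rw [star_eq_conjTranspose, ← fromCols_toCols N, conjTranspose_fromCols_eq_fromRows_conjTranspose,
    fromRows_mul_fromCols] at hN
  obtain ⟨hA, hB, -, hD⟩ := fromBlocks_inj.mp hN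
  exact ⟨hA, hB, hD⟩

theorem PosSemidef.re_trace_mul_nonneg [DecidableEq n] {A C : Matrix n n 𝕜} (hA : A.PosSemidef)
    (hC : C.PosSemidef) : 0 ≤ RCLike.re (A * C).trace := by
  open scoped MatrixOrder in
  obtain ⟨P, rfl⟩ := CStarAlgebra.nonneg_iff_eq_star_mul_self.mp hA.nonneg
  rw [star_eq_conjTranspose, Matrix.mul_assoc, trace_mul_comm]
  exact (RCLike.nonneg_iff.mp (hC.mul_mul_conjTranspose_same P).trace_nonneg).1

theorem re_trace_conjTranspose_mul_self_nonneg (B : Matrix m n 𝕜) :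
    0 ≤ RCLike.re (Bᴴ * B).trace :=
  (RCLike.nonneg_iff.mp (posSemidef_conjTranspose_mul_self B).trace_nonneg).1

theorem re_trace_conjTranspose_mul_trace_nonneg (B : Matrix n n 𝕜) :
    0 ≤ RCLike.re (Bᴴ.trace * B.trace) := by
  rw [trace_conjTranspose, RCLike.star_def, RCLike.conj_mul, ← RCLike.ofReal_pow,
    RCLike.ofReal_re]
  positivity

end

open scoped Kronecker

noncomputable def tensorVec (P Q : Matrix m n 𝕜) : EuclideanSpace 𝕜 ((n × n) × (m × m)) :=
  WithLp.toLp 2 (vec (P ⊗ₖ Q))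

@[simp]
theorem tensorVec_apply (P Q : Matrix m n 𝕜) (i j : n) (s t : m) :
    tensorVec P Q ((i, j), (s, t)) = P s i * Q t j :=
  rfl

variable [Fintype m] [Fintype n]

variable (𝕜 m n) in
noncomputable def tensorSwapCols :
    EuclideanSpace 𝕜 ((n × n) × (m × m)) ≃ₗᵢ[𝕜] EuclideanSpace 𝕜 ((n × n) × (m × m)) :=
  LinearIsometryEquiv.piLpCongrLeft 2 𝕜 𝕜 ((Equiv.prodComm n n).prodCongr (Equiv.refl _))

variable (𝕜 m n) in
noncomputable def tensorSwapRows :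
    EuclideanSpace 𝕜 ((n × n) × (m × m)) ≃ₗᵢ[𝕜] EuclideanSpace 𝕜 ((n × n) × (m × m)) :=
  LinearIsometryEquiv.piLpCongrLeft 2 𝕜 𝕜 ((Equiv.refl _).prodCongr (Equiv.prodComm m m))

variable (𝕜 m n) in
noncomputable def tensorSwapBoth :
    EuclideanSpace 𝕜 ((n × n) × (m × m)) ≃ₗᵢ[𝕜] EuclideanSpace 𝕜 ((n × n) × (m × m)) :=
  LinearIsometryEquiv.piLpCongrLeft 2 𝕜 𝕜 ((Equiv.prodComm n n).prodCongr (Equiv.prodComm m m))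

section Swaps

variable (x : EuclideanSpace 𝕜 ((n × n) × (m × m))) (i j : n) (s t : m)

@[simp]
theorem tensorSwapCols_apply : tensorSwapCols 𝕜 m n x ((i, j), (s, t)) = x ((j, i), (s, t)) :=
  rfl

@[simp]
theorem tensorSwapRows_apply : tensorSwapRows 𝕜 m n x ((i, j), (s, t)) = x ((i, j), (t, s)) :=
  rfl

@[simp]
theorem tensorSwapBoth_apply : tensorSwapBoth 𝕜 m n x ((i, j), (s, t)) = x ((j, i), (t, s)) :=
  rfl

theorem tensorSwapCols_tensorSwapCols : tensorSwapCols 𝕜 m n (tensorSwapCols 𝕜 m n x) = x := by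
  ext ⟨⟨i, j⟩, s, t⟩; simp

theorem tensorSwapBoth_tensorSwapBoth : tensorSwapBoth 𝕜 m n (tensorSwapBoth 𝕜 m n x) = x := by
  ext ⟨⟨i, j⟩, s, t⟩; simp

theorem tensorSwapBoth_tensorSwapCols :
    tensorSwapBoth 𝕜 m n (tensorSwapCols 𝕜 m n x) = tensorSwapRows 𝕜 m n x := by
  ext ⟨⟨i, j⟩, s, t⟩; simp

theorem tensorSwapCols_tensorSwapBoth :
    tensorSwapCols 𝕜 m n (tensorSwapBoth 𝕜 m n x) = tensorSwapRows 𝕜 m n x := by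
  ext ⟨⟨i, j⟩, s, t⟩; simp

theorem tensorSwapBoth_tensorSwapRows :
    tensorSwapBoth 𝕜 m n (tensorSwapRows 𝕜 m n x) = tensorSwapCols 𝕜 m n x := by
  ext ⟨⟨i, j⟩, s, t⟩; simp

theorem tensorSwapRows_tensorSwapBoth :
    tensorSwapRows 𝕜 m n (tensorSwapBoth 𝕜 m n x) = tensorSwapCols 𝕜 m n x := by
  ext ⟨⟨i, j⟩, s, t⟩; simp

theorem tensorSwapCols_tensorSwapRows :
    tensorSwapCols 𝕜 m n (tensorSwapRows 𝕜 m n x) = tensorSwapBoth 𝕜 m n x := by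
  ext ⟨⟨i, j⟩, s, t⟩; simp

theorem tensorSwapRows_tensorSwapCols :
    tensorSwapRows 𝕜 m n (tensorSwapCols 𝕜 m n x) = tensorSwapBoth 𝕜 m n x := by
  ext ⟨⟨i, j⟩, s, t⟩; simp

end Swaps

theorem norm_tensorVec_sq (P Q : Matrix m n 𝕜) :
    ‖tensorVec P Q‖ ^ 2 = RCLike.re (Pᴴ * P).trace * RCLike.re (Qᴴ * Q).trace := by
  simp only [EuclideanSpace.norm_sq_eq, Fintype.sum_prod_type, tensorVec_apply, norm_mul, mul_pow,
    trace, diag_apply, mul_apply, conjTranspose_apply, RCLike.star_def, RCLike.conj_mul,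
    ← RCLike.ofReal_pow, map_sum, RCLike.ofReal_re, Finset.sum_mul_sum]

theorem inner_tensorVec_tensorSwapBoth (P Q : Matrix m n 𝕜) :
    inner 𝕜 (tensorVec P Q) (tensorSwapBoth 𝕜 m n (tensorVec P Q)) =
      (Pᴴ * Q)ᴴ.trace * (Pᴴ * Q).trace := by
  rw [mul_comm]
  simp only [PiLp.inner_apply, Fintype.sum_prod_type, tensorSwapBoth_apply, tensorVec_apply,
    RCLike.inner_apply, map_mul, trace, diag_apply, mul_apply, conjTranspose_apply,
    RCLike.star_def, map_sum, RCLike.conj_conj, Finset.sum_mul_sum]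
  simp only [mul_comm, mul_left_comm, mul_assoc]

theorem inner_tensorVec_tensorSwapCols (P Q : Matrix m n 𝕜) :
    inner 𝕜 (tensorVec P Q) (tensorSwapCols 𝕜 m n (tensorVec P Q)) = (Pᴴ * P * (Qᴴ * Q)).trace := by
  simp only [PiLp.inner_apply, Fintype.sum_prod_type, tensorSwapCols_apply, tensorVec_apply,
    RCLike.inner_apply, map_mul, trace, diag_apply, mul_apply, conjTranspose_apply,
    RCLike.star_def, Finset.sum_mul_sum]
  simp only [mul_comm, mul_left_comm, mul_assoc]

theorem inner_tensorVec_tensorSwapRows (P Q : Matrix m n 𝕜) :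
    inner 𝕜 (tensorVec P Q) (tensorSwapRows 𝕜 m n (tensorVec P Q)) =
      ((Pᴴ * Q)ᴴ * (Pᴴ * Q)).trace := by
  simp only [PiLp.inner_apply, Fintype.sum_prod_type, tensorSwapRows_apply, tensorVec_apply,
    RCLike.inner_apply, map_mul, trace, diag_apply, mul_apply, conjTranspose_apply,
    RCLike.star_def, map_sum, RCLike.conj_conj, Finset.sum_mul_sum]
  rw [Finset.sum_comm]
  refine Finset.sum_congr rfl fun _ _ => Finset.sum_congr rfl fun _ _ => ?_
  rw [Finset.sum_comm]
  simp only [mul_comm, mul_left_comm, mul_assoc]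

theorem re_trace_add_le_and_abs_re_trace_sub_le (P Q : Matrix m n 𝕜) :
    RCLike.re (Pᴴ * P * (Qᴴ * Q)).trace + RCLike.re ((Pᴴ * Q)ᴴ * (Pᴴ * Q)).trace ≤
        RCLike.re (Pᴴ * P).trace * RCLike.re (Qᴴ * Q).trace +
          RCLike.re ((Pᴴ * Q)ᴴ.trace * (Pᴴ * Q).trace) ∧
      |RCLike.re (Pᴴ * P * (Qᴴ * Q)).trace - RCLike.re ((Pᴴ * Q)ᴴ * (Pᴴ * Q)).trace| ≤
        RCLike.re (Pᴴ * P).trace * RCLike.re (Qᴴ * Q).trace -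
          RCLike.re ((Pᴴ * Q)ᴴ.trace * (Pᴴ * Q).trace) := by
  have h₁ := (tensorSwapBoth 𝕜 m n).re_inner_add_re_inner_le _ _ tensorSwapBoth_tensorSwapBoth
    tensorSwapBoth_tensorSwapCols tensorSwapCols_tensorSwapBoth (tensorVec P Q)
  have h₂ := (tensorSwapBoth 𝕜 m n).re_inner_add_re_inner_le _ _ tensorSwapBoth_tensorSwapBoth
    tensorSwapBoth_tensorSwapRows tensorSwapRows_tensorSwapBoth (tensorVec P Q)
  have h₃ := (tensorSwapCols 𝕜 m n).re_inner_add_re_inner_le _ _ tensorSwapCols_tensorSwapCols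
    tensorSwapCols_tensorSwapRows tensorSwapRows_tensorSwapCols (tensorVec P Q)
  simp only [norm_tensorVec_sq, inner_tensorVec_tensorSwapBoth, inner_tensorVec_tensorSwapCols,
    inner_tensorVec_tensorSwapRows] at h₁ h₂ h₃
  exact ⟨by linarith, abs_sub_le_iff.2 ⟨by linarith, by linarith⟩⟩

end Matrix

theorem stmt18_general {k : ℕ} (A B C : Matrix (Fin k) (Fin k) ℂ)
    (h : (Matrix.fromBlocks A B Bᴴ C).PosSemidef) (r : ℕ) :
    (A.trace.re * C.trace.re) ^ r - (Bᴴ.trace * B.trace).re ^ r ≥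
        |((A * C).trace.re) ^ r - ((Bᴴ * B).trace.re) ^ r| ∧
    (A.trace.re * C.trace.re) ^ r + (Bᴴ.trace * B.trace).re ^ r ≥
        ((A * C).trace.re) ^ r + ((Bᴴ * B).trace.re) ^ r := by
  obtain ⟨P, Q, rfl, rfl, rfl⟩ := h.exists_eq_conjTranspose_mul_of_fromBlocks
  obtain ⟨hsum, hdiff⟩ := re_trace_add_le_and_abs_re_trace_sub_le P Q
  have ha := mul_nonneg (re_trace_conjTranspose_mul_self_nonneg P)
    (re_trace_conjTranspose_mul_self_nonneg Q)
  have hb := re_trace_conjTranspose_mul_trace_nonneg (Pᴴ * Q)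
  have hc := (posSemidef_conjTranspose_mul_self P).re_trace_mul_nonneg
    (posSemidef_conjTranspose_mul_self Q)
  have hd := re_trace_conjTranspose_mul_self_nonneg (Pᴴ * Q)
  simp only [RCLike.re_to_complex] at hsum hdiff ha hb hc hd
  obtain ⟨hpow_sum, hpow_diff⟩ := (convexOn_pow r).map_add_map_le_and_abs_map_sub_map_le
    pow_left_monotoneOn ha hb hc hd hsum hdiff
  exact ⟨hpow_diff, hpow_sum⟩

/-- Theorem 5.2: trace inequalities for tensor powers. -/
theorem stmt18 {k : ℕ} (A B C : Matrix (Fin k) (Fin k) ℂ)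
    (h : (Matrix.fromBlocks A B Bᴴ C).PosSemidef) (r : ℕ) (hr : 0 < r) :
    (A.trace.re * C.trace.re) ^ r - (Bᴴ.trace * B.trace).re ^ r ≥
        |((A * C).trace.re) ^ r - ((Bᴴ * B).trace.re) ^ r| ∧
    (A.trace.re * C.trace.re) ^ r + (Bᴴ.trace * B.trace).re ^ r ≥
        ((A * C).trace.re) ^ r + ((Bᴴ * B).trace.re) ^ r :=
  stmt18_general A B C h r
end
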